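/- arXiv:1908.08080 — 4 statements merged into one kernel-verified Lean document; each statement's English description precedes it below -/
import Mathlib

section
/- The map T : 𝒫_w → M_+(E^Δ), T(μ)(A) = ∫_{A∩E} w(x) μ(dx), is a topological embedding: for μ_n, μ ∈ 𝒫_w one has T(μ_n) → T(μ) weakly in M_+(E^Δ) if and only if μ_n → μ weakly on E and ∫ w dμ_n → ∫ w dμ. Hence T is a homeomorphism of 𝒫_w onto its image. -/
open MeasureTheory Filter Topology
open scoped NNReal ENNReal

noncomputable section

instance (X : Type*) [TopologicalSpace X] : MeasurableSpace (OnePoint X) := borel _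
instance (X : Type*) [TopologicalSpace X] : BorelSpace (OnePoint X) := ⟨rfl⟩

/-- The map `T : 𝒫_w → M_+(E^Δ)`, `T(μ)(A) = ∫_{A∩E} w(x) μ(dx)`, is a
topological embedding: for `μ_n, μ ∈ 𝒫_w` one has `T(μ_n) → T(μ)` weakly in `M_+(E^Δ)`
if and only if `μ_n → μ` weakly on `E` and `∫ w dμ_n → ∫ w dμ`.  Hence (together with
injectivity) `T` is a homeomorphism of `𝒫_w` onto its image. -/
theorem stmt_3 {d : ℕ} (w : EuclideanSpace ℝ (Fin d) → ℝ)
    (hw_smooth : ContDiff ℝ (⊤ : ℕ∞) w) (hw_one : ∀ x, 1 ≤ w x)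
    (hw_infty : Tendsto w (cocompact (EuclideanSpace ℝ (Fin d))) atTop)
    (E : Set (EuclideanSpace ℝ (Fin d))) (hE_closed : IsClosed E) (hE_noncompact : ¬ IsCompact E)
    (Pw : Set (Measure E))
    (hPw : Pw = {μ : Measure E | IsProbabilityMeasure μ ∧ Integrable (fun x : E => w x.1) μ})
    (T : Measure E → Measure (OnePoint E))
    (hT : ∀ μ : Measure E,
      T μ = (μ.withDensity (fun x => ENNReal.ofReal (w x.1))).map OnePoint.some) :
    -- `T` is injective on `𝒫_w`:
    (∀ μ ∈ Pw, ∀ ν ∈ Pw, T μ = T ν → μ = ν) ∧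
    -- sequential embedding property:
    (∀ μs : ℕ → Measure E, (∀ n, μs n ∈ Pw) → ∀ μ ∈ Pw,
      ((∀ g : BoundedContinuousFunction (OnePoint E) ℝ,
          Tendsto (fun n => ∫ x, g x ∂(T (μs n))) atTop (𝓝 (∫ x, g x ∂(T μ)))) ↔
        ((∀ g : BoundedContinuousFunction E ℝ,
            Tendsto (fun n => ∫ x, g x ∂(μs n)) atTop (𝓝 (∫ x, g x ∂μ))) ∧
          Tendsto (fun n => ∫ x : E, w x.1 ∂(μs n)) atTop (𝓝 (∫ x : E, w x.1 ∂μ))))) := by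
  subst hPw
  have hwc : Continuous w := hw_smooth.continuous
  have hwE : Continuous fun x : E => w x.1 := hwc.comp continuous_subtype_val
  have hw1 : ∀ x : E, (1 : ℝ) ≤ w x.1 := fun x => hw_one x.1
  have hw0 : ∀ x : E, (0 : ℝ) < w x.1 := fun x => lt_of_lt_of_le zero_lt_one (hw1 x)
  have hmeas_some : Measurable (OnePoint.some : E → OnePoint E) :=
    OnePoint.continuous_coe.measurable
  have hf_meas : Measurable fun x : E => (w x.1).toNNReal :=
    (continuous_real_toNNReal.comp hwE).measurable
  -- key computation: integrals against `T μ`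
  have key : ∀ (μ : Measure E) (g : OnePoint E → ℝ), Continuous g →
      ∫ x, g x ∂(T μ) = ∫ x : E, g (OnePoint.some x) * w x.1 ∂μ := by
    intro μ g hg
    rw [hT]
    rw [integral_map hmeas_some.aemeasurable hg.aestronglyMeasurable]
    have hrw : (fun x : E => ENNReal.ofReal (w x.1))
        = fun x : E => (((w x.1).toNNReal : ℝ≥0) : ℝ≥0∞) := rfl
    rw [hrw, integral_withDensity_eq_integral_smul hf_meas]
    refine integral_congr_ae (ae_of_all _ fun x => ?_)
    show (w x.1).toNNReal • g (OnePoint.some x) = g (OnePoint.some x) * w x.1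
    rw [NNReal.smul_def, Real.coe_toNNReal _ (hw0 x).le, smul_eq_mul, mul_comm]
  constructor
  · -- injectivity
    intro μ _ ν _ h
    have hme : MeasurableEmbedding (OnePoint.some : E → OnePoint E) :=
      OnePoint.isOpenEmbedding_coe.measurableEmbedding
    rw [hT, hT] at h
    have h2 : μ.withDensity (fun x => ENNReal.ofReal (w x.1))
        = ν.withDensity (fun x => ENNReal.ofReal (w x.1)) := by
      ext s hs
      have := congrArg (fun m : Measure (OnePoint E) => m (OnePoint.some '' s)) h
      have hpre : (OnePoint.some : E → OnePoint E) ⁻¹' (OnePoint.some '' s) = s :=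
        Set.preimage_image_eq _ OnePoint.coe_injective
      simpa [hme.map_apply, hpre] using this
    have hmeasd : Measurable fun x : E => ENNReal.ofReal (w x.1) :=
      ENNReal.measurable_ofReal.comp hwE.measurable
    have recov : ∀ ρ : Measure E,
        (ρ.withDensity (fun x => ENNReal.ofReal (w x.1))).withDensity
          (fun x => (ENNReal.ofReal (w x.1))⁻¹) = ρ := fun ρ =>
      withDensity_inv_same hmeasd
        (ae_of_all _ fun x => by
          simp only [ne_eq, ENNReal.ofReal_eq_zero, not_le]; exact hw0 x)
        (ae_of_all _ fun _ => ENNReal.ofReal_ne_top)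
    rw [← recov μ, ← recov ν, h2]
  · -- sequential embedding
    intro μs hμs μ hμ
    haveI : IsProbabilityMeasure μ := hμ.1
    haveI : ∀ n, IsProbabilityMeasure (μs n) := fun n => (hμs n).1
    constructor
    · -- forward direction
      intro hconv
      constructor
      · -- weak convergence on E
        intro g
        have hcocompact : Tendsto (fun x : E => w x.1) (cocompact E) atTop :=
          hw_infty.comp (hE_closed.isClosedEmbedding_subtypeVal.tendsto_cocompact)
        set G : OnePoint E → ℝ := fun x => x.elim 0 (fun e => g e / w e.1) with hG
        have hGsome : ∀ x : E, G (OnePoint.some x) = g x / w x.1 := fun x => rfl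
        have hGcont : Continuous G := by
          rw [OnePoint.continuous_iff]
          constructor
          · rw [coclosedCompact_eq_cocompact]
            have hbd : Tendsto (fun x : E => ‖g‖ / w x.1) (cocompact E) (𝓝 0) :=
              tendsto_const_nhds.div_atTop hcocompact
            refine squeeze_zero_norm (fun x => ?_) hbd
            rw [hGsome, Real.norm_eq_abs, abs_div, abs_of_pos (hw0 x)]
            exact div_le_div₀ (norm_nonneg g)
              (le_trans (Real.norm_eq_abs (g x) ▸ le_refl _) (g.norm_coe_le_norm x))
              (hw0 x) le_rfl
          · exact g.continuous.div hwE fun x => (hw0 x).ne'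
        have hGbd : ∀ x : OnePoint E, ‖G x‖ ≤ ‖g‖ := by
          intro x
          cases x with
          | infty =>
            show |(0 : ℝ)| ≤ ‖g‖
            simpa using norm_nonneg g
          | coe e =>
            rw [hGsome, Real.norm_eq_abs, abs_div, abs_of_pos (hw0 e)]
            calc |g e| / w e.1 ≤ |g e| / 1 :=
                  div_le_div₀ (abs_nonneg _) le_rfl zero_lt_one (hw1 e)
              _ = |g e| := div_one _
              _ ≤ ‖g‖ := g.norm_coe_le_norm e
        set Gb : BoundedContinuousFunction (OnePoint E) ℝ :=
          BoundedContinuousFunction.ofNormedAddCommGroup G hGcont ‖g‖ hGbd with hGb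
        have heq : ∀ ρ : Measure E, ∫ x, Gb x ∂(T ρ) = ∫ x, g x ∂ρ := by
          intro ρ
          have hcoe : ⇑Gb = G := rfl
          rw [hcoe, key ρ G hGcont]
          refine integral_congr_ae (ae_of_all _ fun x => ?_)
          exact div_mul_cancel₀ _ (hw0 x).ne'
        have := hconv Gb
        simpa [heq] using this
      · -- convergence of masses
        have h1 : ∀ ρ : Measure E,
            ∫ x, (1 : BoundedContinuousFunction (OnePoint E) ℝ) x ∂(T ρ)
              = ∫ x : E, w x.1 ∂ρ := by
          intro ρ
          rw [show ⇑(1 : BoundedContinuousFunction (OnePoint E) ℝ) = fun _ => (1 : ℝ) from rfl,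
            key ρ _ continuous_const]
          simp
        have hc := hconv 1
        simp only [h1] at hc
        exact hc
    · -- reverse direction
      rintro ⟨hweak, hmass⟩
      -- key analytic lemma: ∫ h·w dμₙ → ∫ h·w dμ for every bounded continuous h
      have keyA : ∀ h : BoundedContinuousFunction E ℝ,
          Tendsto (fun n => ∫ x : E, h x * w x.1 ∂(μs n)) atTop
            (𝓝 (∫ x : E, h x * w x.1 ∂μ)) := by
        intro h
        have int_hw : ∀ ρ : Measure E, Integrable (fun x : E => w x.1) ρ →
            Integrable (fun x : E => h x * w x.1) ρ := fun ρ hρ =>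
          hρ.bdd_mul h.continuous.aestronglyMeasurable (c := ‖h‖) (ae_of_all _ fun x => h.norm_coe_le_norm x)
        rw [Metric.tendsto_atTop]
        intro ε hε
        set C : ℝ := ‖h‖ + 1 with hCdef
        have hCpos : 0 < C := by positivity
        set δ : ℝ := ε / (4 * C) with hδdef
        have hδpos : 0 < δ := by positivity
        have hCδ : C * δ = ε / 4 := by
          rw [hδdef, mul_div_assoc', div_eq_div_iff (by positivity) (by positivity)]
          ring
        -- choose a truncation level M
        have trunc_tendsto : Tendsto (fun M : ℕ => ∫ x : E, min (w x.1) (M : ℝ) ∂μ) atTop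
            (𝓝 (∫ x : E, w x.1 ∂μ)) := by
          refine tendsto_integral_of_dominated_convergence (fun x : E => w x.1)
            (fun M => (hwE.min continuous_const).aestronglyMeasurable) hμ.2
            (fun M => ae_of_all _ fun x => ?_) (ae_of_all _ fun x => ?_)
          · rw [Real.norm_eq_abs, abs_of_nonneg (le_min (hw0 x).le (Nat.cast_nonneg M))]
            exact min_le_left _ _
          · refine tendsto_atTop_of_eventually_const (i₀ := ⌈w x.1⌉₊) fun i hi => ?_
            exact min_eq_left (le_trans (Nat.le_ceil _) (Nat.cast_le.2 hi))
        obtain ⟨M, hM⟩ : ∃ M : ℕ,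
            ∫ x : E, w x.1 ∂μ - ∫ x : E, min (w x.1) (M : ℝ) ∂μ < δ := by
          obtain ⟨N, hN⟩ := (Metric.tendsto_atTop.1 trunc_tendsto) δ hδpos
          refine ⟨N, ?_⟩
          have := hN N le_rfl
          rw [Real.dist_eq] at this
          have := abs_lt.1 this
          linarith [this.1]
        set wMf : E → ℝ := fun x => min (w x.1) (M : ℝ) with hwMf
        have wM_cont : Continuous wMf := hwE.min continuous_const
        set wM : BoundedContinuousFunction E ℝ :=
          BoundedContinuousFunction.ofNormedAddCommGroup wMf wM_cont M (fun x => by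
            rw [Real.norm_eq_abs, abs_of_nonneg (le_min (hw0 x).le (Nat.cast_nonneg M))]
            exact min_le_right _ _) with hwM
        have hwMcoe : ⇑wM = wMf := rfl
        have hmulcoe : ⇑(h * wM) = fun x => h x * wMf x := rfl
        -- the three estimates
        have outer : ∀ ρ : Measure E, IsProbabilityMeasure ρ →
            Integrable (fun x : E => w x.1) ρ →
            |(∫ x : E, h x * w x.1 ∂ρ) - ∫ x : E, h x * wMf x ∂ρ|
              ≤ C * ((∫ x : E, w x.1 ∂ρ) - ∫ x : E, wMf x ∂ρ) := by
          intro ρ hρ hint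
          have h1 : Integrable (fun x : E => h x * w x.1) ρ := int_hw ρ hint
          have h2 : Integrable (fun x : E => h x * wMf x) ρ := by
            have := (h * wM).integrable ρ
            rwa [hmulcoe] at this
          have h3 : Integrable wMf ρ := by
            have := wM.integrable ρ
            rwa [hwMcoe] at this
          rw [← integral_sub h1 h2, ← integral_sub hint h3, ← integral_const_mul]
          have hb : ∀ x : E, |h x * w x.1 - h x * wMf x| ≤ C * (w x.1 - wMf x) := by
            intro x
            rw [← mul_sub, abs_mul]
            have hnn : 0 ≤ w x.1 - wMf x := sub_nonneg.2 (min_le_left _ _)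
            rw [abs_of_nonneg hnn]
            refine mul_le_mul_of_nonneg_right ?_ hnn
            calc |h x| ≤ ‖h‖ := h.norm_coe_le_norm x
              _ ≤ C := by rw [hCdef]; linarith
          calc |∫ x : E, (h x * w x.1 - h x * wMf x) ∂ρ|
              ≤ ∫ x : E, |h x * w x.1 - h x * wMf x| ∂ρ := by
                simpa [Real.norm_eq_abs] using
                  norm_integral_le_integral_norm (fun x : E => h x * w x.1 - h x * wMf x) (μ := ρ)
            _ ≤ ∫ x : E, C * (w x.1 - wMf x) ∂ρ :=
                integral_mono (h1.sub h2).abs ((hint.sub h3).const_mul C)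
                  fun x => hb x
        -- convergence facts
        have hJ : Tendsto (fun n => ∫ x : E, h x * wMf x ∂(μs n)) atTop
            (𝓝 (∫ x : E, h x * wMf x ∂μ)) := by
          have := hweak (h * wM)
          rwa [hmulcoe] at this
        have hcn : Tendsto (fun n => (∫ x : E, w x.1 ∂(μs n)) - ∫ x : E, wMf x ∂(μs n)) atTop
            (𝓝 ((∫ x : E, w x.1 ∂μ) - ∫ x : E, wMf x ∂μ)) := by
          have := hweak wM
          rw [hwMcoe] at this
          exact hmass.sub this
        obtain ⟨N₁, hN₁⟩ := eventually_atTop.1 (hcn.eventually_lt_const hM)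
        obtain ⟨N₂, hN₂⟩ := (Metric.tendsto_atTop.1 hJ) (ε / 4) (by positivity)
        refine ⟨max N₁ N₂, fun n hn => ?_⟩
        have hn₁ := hN₁ n (le_trans (le_max_left _ _) hn)
        have hn₂ := hN₂ n (le_trans (le_max_right _ _) hn)
        have b1 := outer (μs n) (hμs n).1 (hμs n).2
        have b3 := outer μ hμ.1 hμ.2
        rw [Real.dist_eq] at hn₂ ⊢
        have e1 : C * ((∫ x : E, w x.1 ∂(μs n)) - ∫ x : E, wMf x ∂(μs n)) < C * δ :=
          mul_lt_mul_of_pos_left hn₁ hCpos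
        have e3 : C * ((∫ x : E, w x.1 ∂μ) - ∫ x : E, wMf x ∂μ) < C * δ :=
          mul_lt_mul_of_pos_left hM hCpos
        have tri : |(∫ x : E, h x * w x.1 ∂(μs n)) - ∫ x : E, h x * w x.1 ∂μ|
            ≤ |(∫ x : E, h x * w x.1 ∂(μs n)) - ∫ x : E, h x * wMf x ∂(μs n)|
              + |(∫ x : E, h x * wMf x ∂(μs n)) - ∫ x : E, h x * wMf x ∂μ|
              + |(∫ x : E, h x * wMf x ∂μ) - ∫ x : E, h x * w x.1 ∂μ| := by
          have := abs_sub_le (∫ x : E, h x * w x.1 ∂(μs n)) (∫ x : E, h x * wMf x ∂(μs n))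
            (∫ x : E, h x * w x.1 ∂μ)
          have := abs_sub_le (∫ x : E, h x * wMf x ∂(μs n)) (∫ x : E, h x * wMf x ∂μ)
            (∫ x : E, h x * w x.1 ∂μ)
          linarith [abs_sub_le (∫ x : E, h x * w x.1 ∂(μs n)) (∫ x : E, h x * wMf x ∂(μs n))
            (∫ x : E, h x * w x.1 ∂μ), abs_sub_le (∫ x : E, h x * wMf x ∂(μs n))
            (∫ x : E, h x * wMf x ∂μ) (∫ x : E, h x * w x.1 ∂μ)]
        have b3' : |(∫ x : E, h x * wMf x ∂μ) - ∫ x : E, h x * w x.1 ∂μ|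
            ≤ C * ((∫ x : E, w x.1 ∂μ) - ∫ x : E, wMf x ∂μ) := by
          rwa [abs_sub_comm]
        have f1 : |(∫ x : E, h x * w x.1 ∂(μs n)) - ∫ x : E, h x * wMf x ∂(μs n)| < C * δ :=
          lt_of_le_of_lt b1 e1
        have f3 : |(∫ x : E, h x * wMf x ∂μ) - ∫ x : E, h x * w x.1 ∂μ| < C * δ :=
          lt_of_le_of_lt b3' e3
        calc |(∫ x : E, h x * w x.1 ∂(μs n)) - ∫ x : E, h x * w x.1 ∂μ|
            ≤ _ := tri
          _ < C * δ + ε / 4 + C * δ := add_lt_add (add_lt_add f1 hn₂) f3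
          _ = 3 * (ε / 4) := by rw [hCδ]; ring
          _ < ε := by linarith
      -- now conclude
      intro g
      have h1 : ∀ ρ : Measure E,
          ∫ x, g x ∂(T ρ) = ∫ x : E, g (OnePoint.some x) * w x.1 ∂ρ :=
        fun ρ => key ρ g g.continuous
      simp only [h1]
      exact keyA (g.compContinuous ⟨(OnePoint.some : E → OnePoint E), OnePoint.continuous_coe⟩)
end
end

section
/- The closure of T(𝒫_w) in M_+(E^Δ) with respect to the topology of weak convergence is exactly the set 𝒳 = {ν ∈ M_+(E^Δ) : ⟨w^{-1}, ν⟩ = 1}. -/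
open MeasureTheory Filter Topology
open scoped NNReal ENNReal

noncomputable section

/-- The closure of `T(𝒫_w)` in `M_+(E^Δ)` with respect to the topology of
weak convergence is exactly the set `𝒳 = {ν ∈ M_+(E^Δ) : ⟨w⁻¹, ν⟩ = 1}`. -/
theorem stmt_4 {d : ℕ} (w : EuclideanSpace ℝ (Fin d) → ℝ)
    (hw_smooth : ContDiff ℝ (⊤ : ℕ∞) w) (hw_one : ∀ x, 1 ≤ w x)
    (hw_infty : Tendsto w (cocompact (EuclideanSpace ℝ (Fin d))) atTop)
    (E : Set (EuclideanSpace ℝ (Fin d))) (hE_closed : IsClosed E) (hE_noncompact : ¬ IsCompact E)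
    -- `w⁻¹` extended to `E^Δ` by `w⁻¹(Δ) = 0`:
    (winv : OnePoint E → ℝ)
    (hwinv_infty : winv OnePoint.infty = 0)
    (hwinv_coe : ∀ x : E, winv (OnePoint.some x) = (w x.1)⁻¹)
    -- the image `T(𝒫_w)` inside the space of finite measures on `E^Δ`:
    (TPw : Set (FiniteMeasure (OnePoint E)))
    (hTPw : TPw = {ν : FiniteMeasure (OnePoint E) |
      ∃ μ : Measure E, IsProbabilityMeasure μ ∧ Integrable (fun x : E => w x.1) μ ∧
        (ν : Measure (OnePoint E)) =
          (μ.withDensity (fun x => ENNReal.ofReal (w x.1))).map OnePoint.some}) :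
    closure TPw = {ν : FiniteMeasure (OnePoint E) |
      (∫⁻ x, ENNReal.ofReal (winv x) ∂(ν : Measure (OnePoint E))) = 1} := by
  classical
  have hw_cont : Continuous w := hw_smooth.continuous
  have hw_pos : ∀ x, 0 < w x := fun x => lt_of_lt_of_le one_pos (hw_one x)
  have hwE_cont : Continuous (fun x : E => w x.1) := hw_cont.comp continuous_subtype_val
  have hwinv_cont : Continuous winv := by
    rw [OnePoint.continuous_iff]
    constructor
    · rw [hwinv_infty]
      have : Tendsto (fun x : E => (w x.1)⁻¹) (cocompact E) (𝓝 0) :=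
        (hw_infty.comp hE_closed.isClosedEmbedding_subtypeVal.tendsto_cocompact).inv_tendsto_atTop
      rw [Filter.coclosedCompact_eq_cocompact]
      simpa only [hwinv_coe] using this
    · have : Continuous (fun x : E => (w x.1)⁻¹) :=
        hwE_cont.inv₀ (fun x => (hw_pos x.1).ne')
      simpa only [hwinv_coe] using this
  have hwinv_nonneg : ∀ y, 0 ≤ winv y := by
    intro y
    induction y using OnePoint.rec with
    | infty => rw [hwinv_infty]
    | coe x => rw [hwinv_coe]; exact inv_nonneg.2 (hw_pos x.1).le
  have hwinv_le_one : ∀ y, winv y ≤ 1 := by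
    intro y
    induction y using OnePoint.rec with
    | infty => rw [hwinv_infty]; exact zero_le_one
    | coe x => rw [hwinv_coe]; exact inv_le_one_of_one_le₀ (hw_one x.1)
  have me : MeasurableEmbedding (OnePoint.some : E → OnePoint E) :=
    OnePoint.isOpenEmbedding_coe.measurableEmbedding
  refine Set.Subset.antisymm (closure_minimal ?_ ?_) ?_
  · -- TPw ⊆ 𝒳
    intro ν hν
    rw [hTPw] at hν
    obtain ⟨μ, hμ, -, hcoe⟩ := hν
    simp only [Set.mem_setOf_eq, hcoe]
    have hwE_meas : Measurable (fun x : E => ENNReal.ofReal (w x.1)) :=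
      ENNReal.measurable_ofReal.comp hwE_cont.measurable
    rw [me.lintegral_map]
    rw [lintegral_withDensity_eq_lintegral_mul _ hwE_meas]
    · have : ∀ x : E, (ENNReal.ofReal (w x.1) * ENNReal.ofReal (winv (OnePoint.some x))) = 1 := by
        intro x
        rw [hwinv_coe, ← ENNReal.ofReal_mul (hw_pos x.1).le, mul_inv_cancel₀ (hw_pos x.1).ne',
          ENNReal.ofReal_one]
      simp only [Pi.mul_apply, Function.comp_apply, this, lintegral_one, measure_univ]
    · exact (ENNReal.measurable_ofReal.comp (hwinv_cont.measurable.comp me.measurable))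
  · -- 𝒳 is closed
    set fb : BoundedContinuousFunction (OnePoint E) ℝ :=
      BoundedContinuousFunction.ofNormedAddCommGroup winv hwinv_cont 1
        (fun y => by rw [Real.norm_eq_abs, abs_of_nonneg (hwinv_nonneg y)]; exact hwinv_le_one y)
    have hkey : ∀ ν : Measure (OnePoint E),
        (∫⁻ x, ENNReal.ofReal (winv x) ∂ν) = ∫⁻ x, (fb.nnrealPart x : ℝ≥0∞) ∂ν := by
      intro ν
      refine lintegral_congr fun x => ?_
      rfl
    have heq : {ν : FiniteMeasure (OnePoint E) |
        (∫⁻ x, ENNReal.ofReal (winv x) ∂(ν : Measure (OnePoint E))) = 1}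
        = (fun ν : FiniteMeasure (OnePoint E) => ν.testAgainstNN fb.nnrealPart) ⁻¹' {1} := by
      ext ν
      simp only [Set.mem_setOf_eq, Set.mem_preimage, Set.mem_singleton_iff]
      rw [hkey, ← FiniteMeasure.testAgainstNN_coe_eq]
      exact_mod_cast Iff.rfl
    rw [heq]
    exact isClosed_singleton.preimage (FiniteMeasure.continuous_testAgainstNN_eval _)
  · -- 𝒳 ⊆ closure TPw
    intro ν hν
    simp only [Set.mem_setOf_eq] at hν
    have hwE_meas : Measurable (fun x : E => ENNReal.ofReal (w x.1)) :=
      ENNReal.measurable_ofReal.comp hwE_cont.measurable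
    have hwinvE_meas : Measurable (fun x : E => ENNReal.ofReal (w x.1)⁻¹) :=
      ENNReal.measurable_ofReal.comp ((hwE_cont.inv₀ fun x => (hw_pos x.1).ne').measurable)
    have hwinv_meas : Measurable (fun y => ENNReal.ofReal (winv y)) :=
      ENNReal.measurable_ofReal.comp hwinv_cont.measurable
    set νm : Measure (OnePoint E) := (ν : Measure (OnePoint E)) with hνm
    set c : ℝ≥0∞ := νm {OnePoint.infty} with hc
    have hc_fin : c ≠ ∞ := (measure_lt_top νm _).ne
    set νE : Measure E := νm.comap OnePoint.some with hνE
    have hrange : Set.range (OnePoint.some : E → OnePoint E) = {OnePoint.infty}ᶜ := by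
      rw [← OnePoint.compl_range_coe, compl_compl]
    have hmap : νE.map OnePoint.some = νm.restrict {OnePoint.infty}ᶜ := by
      rw [hνE, me.map_comap, hrange]
    -- ν decomposition
    have hdec : νm = νm.restrict {OnePoint.infty}ᶜ + c • Measure.dirac OnePoint.infty := by
      conv_lhs => rw [← Measure.restrict_add_restrict_compl
        (μ := νm) (MeasurableSet.singleton OnePoint.infty)]
      rw [Measure.restrict_singleton, add_comm]
    -- the key mass identity
    have hmass : (∫⁻ x, ENNReal.ofReal (w x.1)⁻¹ ∂νE) = 1 := by
      have h0 : (∫⁻ y, ENNReal.ofReal (winv y) ∂(c • Measure.dirac OnePoint.infty)) = 0 := by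
        rw [lintegral_smul_measure, lintegral_dirac' _ hwinv_meas, hwinv_infty,
          ENNReal.ofReal_zero, smul_zero]
      have h1 : (∫⁻ y, ENNReal.ofReal (winv y) ∂(νm.restrict {OnePoint.infty}ᶜ)) = 1 := by
        have := hν
        rw [hdec, lintegral_add_measure, h0, add_zero] at this
        exact this
      rw [← hmap, me.lintegral_map _] at h1
      simpa only [Function.comp, hwinv_coe] using h1
    have hνE_fin : νE Set.univ < ∞ := by
      have : νE Set.univ = νm (Set.range (OnePoint.some : E → OnePoint E)) := by
        rw [hνE, me.comap_apply, Set.image_univ]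
      rw [this]; exact measure_lt_top _ _
    set μ0 : Measure E := νE.withDensity (fun x => ENNReal.ofReal (w x.1)⁻¹) with hμ0
    have hμ0_prob : IsProbabilityMeasure μ0 := by
      constructor
      rw [hμ0, withDensity_apply _ MeasurableSet.univ, setLIntegral_univ, hmass]
    -- T μ0 = νE
    have hTμ0 : μ0.withDensity (fun x => ENNReal.ofReal (w x.1)) = νE := by
      rw [hμ0, ← withDensity_mul _ hwinvE_meas hwE_meas]
      have : (fun x : E => ENNReal.ofReal (w x.1)⁻¹) * (fun x => ENNReal.ofReal (w x.1)) = 1 := by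
        funext x
        simp only [Pi.mul_apply, Pi.one_apply]
        rw [← ENNReal.ofReal_mul (inv_nonneg.2 (hw_pos x.1).le),
          inv_mul_cancel₀ (hw_pos x.1).ne', ENNReal.ofReal_one]
      rw [this, withDensity_one]
    have hμ0_int : Integrable (fun x : E => w x.1) μ0 := by
      refine ⟨hwE_cont.aestronglyMeasurable, ?_⟩
      show (∫⁻ x, (‖w x.1‖₊ : ℝ≥0∞) ∂μ0) < ∞
      have : ∀ x : E, (‖w x.1‖₊ : ℝ≥0∞) = ENNReal.ofReal (w x.1) := fun x =>
        (Real.enorm_eq_ofReal (hw_pos x.1).le)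
      calc ∫⁻ x, (‖w x.1‖₊ : ℝ≥0∞) ∂μ0 = ∫⁻ x, ENNReal.ofReal (w x.1) ∂μ0 :=
            lintegral_congr fun x => this x
        _ = νE Set.univ := by
            rw [← setLIntegral_univ, ← withDensity_apply _ MeasurableSet.univ, hTμ0]
        _ < ∞ := hνE_fin
    -- choice of escaping points
    have hpoints : ∀ M : ℝ, ∃ x : E, M ≤ w x.1 := by
      intro M
      by_contra h
      push_neg at h
      have : ∀ᶠ y in cocompact (EuclideanSpace ℝ (Fin d)), M ≤ w y :=
        hw_infty.eventually_ge_atTop M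
      obtain ⟨K, hK, hKsub⟩ := hasBasis_cocompact.eventually_iff.mp this
      refine hE_noncompact (hK.of_isClosed_subset hE_closed fun x hx => ?_)
      by_contra hxK
      exact absurd (hKsub hxK) (not_le.2 (h ⟨x, hx⟩))
    choose xx hxx using fun n : ℕ => hpoints (max (n + 1 : ℝ) c.toReal)
    set b : ℕ → ℝ≥0∞ := fun n => ENNReal.ofReal (w (xx n).1) with hb
    have hb_ne0 : ∀ n, b n ≠ 0 := fun n => by
      simp only [hb, ne_eq, ENNReal.ofReal_eq_zero, not_le]; exact hw_pos _
    have hb_ne_top : ∀ n, b n ≠ ∞ := fun n => ENNReal.ofReal_ne_top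
    set r : ℕ → ℝ≥0∞ := fun n => c / b n with hr
    have hr_le_one : ∀ n, r n ≤ 1 := by
      intro n
      refine ENNReal.div_le_of_le_mul ?_
      rw [one_mul, hb]
      calc c = ENNReal.ofReal c.toReal := (ENNReal.ofReal_toReal hc_fin).symm
        _ ≤ ENNReal.ofReal (w (xx n).1) :=
          ENNReal.ofReal_le_ofReal (le_trans (le_max_right _ _) (hxx n))
    have hr_ne_top : ∀ n, r n ≠ ∞ := fun n => ((hr_le_one n).trans_lt ENNReal.one_lt_top).ne
    have hrb : ∀ n, r n * b n = c := fun n => ENNReal.div_mul_cancel (hb_ne0 n) (hb_ne_top n)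
    have hw_atTop : Tendsto (fun n : ℕ => w (xx n).1) atTop atTop := by
      refine tendsto_atTop_mono (fun n => le_trans (le_max_left _ _) (hxx n)) ?_
      exact tendsto_atTop_add_const_right _ 1 tendsto_natCast_atTop_atTop
    have hr_tendsto : Tendsto r atTop (𝓝 0) := by
      have hbtop : Tendsto b atTop (𝓝 ∞) := ENNReal.tendsto_ofReal_atTop.comp hw_atTop
      have hinv : Tendsto (fun n => (b n)⁻¹) atTop (𝓝 0) := by
        simpa using ENNReal.tendsto_inv_iff.2 hbtop
      have := ENNReal.Tendsto.const_mul hinv (Or.inr hc_fin)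
      simpa [hr, div_eq_mul_inv, mul_zero] using this
    -- approximating measures
    set μn : ℕ → Measure E := fun n => (1 - r n) • μ0 + r n • Measure.dirac (xx n) with hμn
    have hμn_prob : ∀ n, IsProbabilityMeasure (μn n) := by
      intro n
      constructor
      simp only [hμn, Measure.add_apply, Measure.smul_apply, measure_univ, smul_eq_mul, mul_one]
      exact tsub_add_cancel_of_le (hr_le_one n)
    have hμn_int : ∀ n, Integrable (fun x : E => w x.1) (μn n) := by
      intro n
      refine Integrable.add_measure ?_ ?_
      · exact hμ0_int.smul_measure (ne_top_of_le_ne_top ENNReal.one_ne_top tsub_le_self)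
      · refine Integrable.smul_measure ?_ (hr_ne_top n)
        refine ⟨hwE_cont.aestronglyMeasurable, ?_⟩
        show (∫⁻ x, (‖w x.1‖₊ : ℝ≥0∞) ∂Measure.dirac (xx n)) < ∞
        rw [lintegral_dirac' _ (show Measurable fun x : E => (‖w x.1‖₊ : ℝ≥0∞) from measurable_coe_nnreal_ennreal.comp hwE_cont.nnnorm.measurable)]
        exact ENNReal.coe_lt_top
    -- the image measures
    set Tm : ℕ → Measure (OnePoint E) := fun n =>
      (1 - r n) • (νm.restrict {OnePoint.infty}ᶜ) + c • Measure.dirac (OnePoint.some (xx n))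
      with hTm
    have hTn : ∀ n, ((μn n).withDensity (fun x => ENNReal.ofReal (w x.1))).map OnePoint.some
        = Tm n := by
      intro n
      have hdir : (Measure.dirac (xx n)).withDensity (fun x => ENNReal.ofReal (w x.1))
          = b n • Measure.dirac (xx n) := by
        ext s hs
        classical
        rw [withDensity_apply _ hs, Measure.smul_apply,
          setLIntegral_dirac' hwE_meas hs, Measure.dirac_apply' _ hs]
        by_cases hmem : xx n ∈ s
        · simp [hmem, Set.indicator_of_mem, hb]
        · simp [hmem]
      rw [hμn, withDensity_add_measure, withDensity_smul_measure, withDensity_smul_measure,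
        hTμ0, hdir, smul_smul, hrb,
        Measure.map_add _ _ me.measurable, Measure.map_smul, Measure.map_smul, hmap,
        Measure.map_dirac' me.measurable, hTm]
    have hTm_fin : ∀ n, IsFiniteMeasure (Tm n) := by
      intro n
      constructor
      rw [hTm]
      simp only [Measure.add_apply, Measure.smul_apply, smul_eq_mul]
      refine ENNReal.add_lt_top.2 ⟨?_, ?_⟩
      · exact ENNReal.mul_lt_top (lt_of_le_of_lt tsub_le_self ENNReal.one_lt_top)
          (lt_of_le_of_lt (Measure.restrict_le_self _) (measure_lt_top _ _))
      · exact ENNReal.mul_lt_top hc_fin.lt_top (by simp)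
    set seq : ℕ → FiniteMeasure (OnePoint E) := fun n => ⟨Tm n, hTm_fin n⟩ with hseq
    have hseq_mem : ∀ n, seq n ∈ TPw := by
      intro n
      rw [hTPw]
      exact ⟨μn n, hμn_prob n, hμn_int n, (hTn n).symm⟩
    -- convergence
    have hxx_infty : Tendsto (fun n => (OnePoint.some (xx n) : OnePoint E)) atTop
        (𝓝 OnePoint.infty) := by
      refine OnePoint.tendsto_coe_infty.comp ?_
      rw [Filter.coclosedCompact_eq_cocompact, hasBasis_cocompact.tendsto_right_iff]
      intro K hK
      obtain ⟨M, hM⟩ := (hK.image hwE_cont).bddAbove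
      filter_upwards [eventually_ge_atTop ⌈M⌉₊] with n hn
      simp only [Set.mem_compl_iff]
      intro hmem
      have h1 : w (xx n).1 ≤ M := hM (Set.mem_image_of_mem _ hmem)
      have h2 : (n : ℝ) + 1 ≤ w (xx n).1 := le_trans (le_max_left _ _) (hxx n)
      have h3 : M ≤ (⌈M⌉₊ : ℝ) := Nat.le_ceil M
      have h4 : ((⌈M⌉₊ : ℕ) : ℝ) ≤ (n : ℝ) := Nat.cast_le.2 hn
      linarith
    have htendsto : Tendsto seq atTop (𝓝 ν) := by
      rw [FiniteMeasure.tendsto_iff_forall_lintegral_tendsto]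
      intro f
      have hfmeas : Measurable (fun y : OnePoint E => (f y : ℝ≥0∞)) :=
        measurable_coe_nnreal_ennreal.comp f.continuous.measurable
      set A : ℝ≥0∞ := ∫⁻ y, (f y : ℝ≥0∞) ∂(νm.restrict {OnePoint.infty}ᶜ) with hA
      have hA_fin : A ≠ ∞ := by
        refine ne_top_of_le_ne_top (f.lintegral_lt_top_of_nnreal (ν : Measure (OnePoint E))).ne ?_
        exact lintegral_mono' (Measure.restrict_le_self) le_rfl
      have hlhs : ∀ n, (∫⁻ y, (f y : ℝ≥0∞) ∂(seq n : Measure (OnePoint E)))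
          = (1 - r n) * A + c * (f (OnePoint.some (xx n)) : ℝ≥0∞) := by
        intro n
        show (∫⁻ y, (f y : ℝ≥0∞) ∂(Tm n)) = _
        rw [hTm, lintegral_add_measure, lintegral_smul_measure, lintegral_smul_measure,
          lintegral_dirac' _ hfmeas, smul_eq_mul, smul_eq_mul]
      have hrhs : (∫⁻ y, (f y : ℝ≥0∞) ∂(ν : Measure (OnePoint E)))
          = A + c * (f OnePoint.infty : ℝ≥0∞) := by
        show (∫⁻ y, (f y : ℝ≥0∞) ∂νm) = _
        conv_lhs => rw [hdec]
        rw [lintegral_add_measure, lintegral_smul_measure, lintegral_dirac' _ hfmeas, smul_eq_mul]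
      simp only [hlhs, hrhs]
      have h1 : Tendsto (fun n => (1 - r n) * A) atTop (𝓝 A) := by
        have hsub : Tendsto (fun n => 1 - r n) atTop (𝓝 1) := by
          have := ENNReal.Tendsto.sub (tendsto_const_nhds (x := (1:ℝ≥0∞))) hr_tendsto
            (Or.inl ENNReal.one_ne_top)
          simpa using this
        have := ENNReal.Tendsto.mul_const (b := A) hsub (Or.inl one_ne_zero)
        simpa using this
      have h2 : Tendsto (fun n => c * (f (OnePoint.some (xx n)) : ℝ≥0∞)) atTop
          (𝓝 (c * (f OnePoint.infty : ℝ≥0∞))) := by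
        refine ENNReal.Tendsto.const_mul ?_ (Or.inr hc_fin)
        exact ENNReal.tendsto_coe.2 ((f.continuous.tendsto _).comp hxx_infty)
      exact h1.add h2
    exact mem_closure_of_tendsto htendsto (Eventually.of_forall hseq_mem)
end
end

section
/- For every f̃ ∈ 𝒟 and every ν* ∈ 𝒳, there exists a sequence of measures ν_n ∈ T(𝒫_w) such that ν_n → ν* weakly in M_+(E^Δ) and f̃(ν_n) = f̃(ν*) for all n ∈ ℕ. -/
open MeasureTheory Filter Topology
open scoped NNReal ENNReal

noncomputable section

/-- `w⁻¹` extended to `E^Δ` by `w⁻¹(Δ) = 0`. -/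
def winvOP {d : ℕ} (w : EuclideanSpace ℝ (Fin d) → ℝ) (E : Set (EuclideanSpace ℝ (Fin d))) :
    OnePoint E → ℝ :=
  fun z => z.elim 0 (fun y => (w y.1)⁻¹)

/-- The generators `ν ↦ ⟨φ,ν⟩ e^{-⟨1,ν⟩}`, `φ ∈ C_c^∞(ℝ^d)` (with `φ(Δ) := 0` and
`⟨1,ν⟩ = ν(E^Δ)`), of the algebra `𝒟`, viewed as functions on all of `M_+(E^Δ)`. -/
def DGen {d : ℕ} (E : Set (EuclideanSpace ℝ (Fin d))) :
    Set (FiniteMeasure (OnePoint E) → ℝ) :=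
  {g | ∃ φ : EuclideanSpace ℝ (Fin d) → ℝ, ContDiff ℝ (⊤ : ℕ∞) φ ∧ HasCompactSupport φ ∧
    g = fun ν => (∫ x, (x.elim 0 (fun y => φ y.1)) ∂ν.toMeasure) *
      Real.exp (-(ν.toMeasure Set.univ).toReal)}

section Aux

variable {X : Type*} [TopologicalSpace X] [MeasurableSpace X] [BorelSpace X]

lemma aux_measurableEmbedding_some :
    MeasurableEmbedding (OnePoint.some : X → OnePoint X) :=
  OnePoint.isOpenEmbedding_coe.measurableEmbedding

lemma aux_measurableSet_infty :
    MeasurableSet ({OnePoint.infty} : Set (OnePoint X)) := by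
  rw [← OnePoint.compl_range_coe]
  exact OnePoint.isOpen_range_coe.measurableSet.compl

lemma aux_measurable_elim {β : Type*} [MeasurableSpace β] (a : β) {g : X → β}
    (hg : Measurable g) : Measurable (fun z : OnePoint X => z.elim a g) := by
  classical
  intro s hs
  have h1 : (fun z : OnePoint X => z.elim a g) ⁻¹' s =
      (OnePoint.some '' (g ⁻¹' s)) ∪
        (if a ∈ s then ({OnePoint.infty} : Set (OnePoint X)) else ∅) := by
    ext z
    induction z using OnePoint.rec with
    | infty =>
      by_cases ha : a ∈ s <;> simp [ha]
    | coe y =>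
      by_cases hy : g y ∈ s <;> simp [hy]
  rw [h1]
  refine MeasurableSet.union
    (aux_measurableEmbedding_some.measurableSet_image.2 (hg hs)) ?_
  split
  · exact aux_measurableSet_infty
  · exact MeasurableSet.empty

end Aux

lemma aux_map_withDensity {α β : Type*} [MeasurableSpace α] [MeasurableSpace β] {f : α → β}
    (hf : MeasurableEmbedding f) (μ : Measure α) {g : β → ℝ≥0∞} (hg : Measurable g) :
    (μ.withDensity (g ∘ f)).map f = (μ.map f).withDensity g := by
  ext s hs
  calc (μ.withDensity (g ∘ f)).map f s
      = μ.withDensity (g ∘ f) (f ⁻¹' s) := hf.map_apply _ _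
    _ = ∫⁻ a in f ⁻¹' s, g (f a) ∂μ := withDensity_apply _ (hf.measurable hs)
    _ = ∫⁻ b, g b ∂((μ.restrict (f ⁻¹' s)).map f) := (hf.lintegral_map _).symm
    _ = ∫⁻ b in s, g b ∂(μ.map f) := by rw [← Measure.restrict_map hf.measurable hs]
    _ = (μ.map f).withDensity g s := (withDensity_apply _ hs).symm

lemma aux_withDensity_dirac {α : Type*} [MeasurableSpace α] (a : α) {g : α → ℝ≥0∞}
    (hg : Measurable g) : (Measure.dirac a).withDensity g = g a • Measure.dirac a := by
  classical
  ext s hs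
  rw [withDensity_apply _ hs, setLIntegral_dirac' hg hs, Measure.smul_apply, smul_eq_mul,
    Measure.dirac_apply' a hs]
  by_cases h : a ∈ s <;> simp [h]

/-- For every `f̃ ∈ 𝒟` and every `ν* ∈ 𝒳`, there exists a sequence of measures
`ν_n ∈ T(𝒫_w)` such that `ν_n → ν*` weakly in `M_+(E^Δ)` and `f̃(ν_n) = f̃(ν*)` for all `n`. -/
theorem stmt_9 {d : ℕ} (w : EuclideanSpace ℝ (Fin d) → ℝ)
    (hw_smooth : ContDiff ℝ (⊤ : ℕ∞) w) (hw_one : ∀ x, 1 ≤ w x)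
    (hw_infty : Tendsto w (cocompact (EuclideanSpace ℝ (Fin d))) atTop)
    (E : Set (EuclideanSpace ℝ (Fin d))) (hE_closed : IsClosed E) (hE_noncompact : ¬ IsCompact E)
    (f : FiniteMeasure (OnePoint E) → ℝ) (hf : f ∈ NonUnitalAlgebra.adjoin ℝ (DGen E))
    (νstar : FiniteMeasure (OnePoint E))
    (hνstar : (∫⁻ x, ENNReal.ofReal (winvOP w E x) ∂νstar.toMeasure) = 1) :
    ∃ νs : ℕ → FiniteMeasure (OnePoint E),
      (∀ n, ∃ μ : Measure E, IsProbabilityMeasure μ ∧ Integrable (fun x : E => w x.1) μ ∧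
        (νs n).toMeasure =
          (μ.withDensity (fun x => ENNReal.ofReal (w x.1))).map OnePoint.some) ∧
      Tendsto νs atTop (𝓝 νstar) ∧
      (∀ n, f (νs n) = f νstar) := by
  classical
  have hw_cont : Continuous w := hw_smooth.continuous
  -- Step 1: localization of `f` via induction over the non-unital subalgebra.
  obtain ⟨K, hKcomp, hP⟩ : ∃ K : Set (EuclideanSpace ℝ (Fin d)), IsCompact K ∧
      ∀ ν ν' : FiniteMeasure (OnePoint E),
        (∀ φ : EuclideanSpace ℝ (Fin d) → ℝ, ContDiff ℝ (⊤ : ℕ∞) φ → HasCompactSupport φ →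
          tsupport φ ⊆ K →
          (∫ x, (x.elim 0 (fun y => φ y.1)) ∂ν.toMeasure) =
            Real.exp ((ν.toMeasure Set.univ).toReal - (ν'.toMeasure Set.univ).toReal) *
              ∫ x, (x.elim 0 (fun y => φ y.1)) ∂ν'.toMeasure) →
        f ν = f ν' := by
    induction hf using NonUnitalAlgebra.adjoin_induction with
    | mem g hg =>
      obtain ⟨φ, hφ1, hφ2, rfl⟩ := hg
      refine ⟨tsupport φ, hφ2, fun ν ν' h => ?_⟩
      have h' := h φ hφ1 hφ2 subset_rfl
      dsimp only
      rw [h', mul_assoc, mul_comm (Real.exp _), mul_assoc, ← Real.exp_add]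
      congr 2
      ring
    | add g₁ g₂ _ _ ih₁ ih₂ =>
      obtain ⟨K₁, hK₁, h₁⟩ := ih₁
      obtain ⟨K₂, hK₂, h₂⟩ := ih₂
      refine ⟨K₁ ∪ K₂, hK₁.union hK₂, fun ν ν' h => ?_⟩
      have e₁ := h₁ ν ν' (fun φ a b cc => h φ a b (cc.trans Set.subset_union_left))
      have e₂ := h₂ ν ν' (fun φ a b cc => h φ a b (cc.trans Set.subset_union_right))
      show g₁ ν + g₂ ν = g₁ ν' + g₂ ν'
      rw [e₁, e₂]
    | zero => exact ⟨∅, isCompact_empty, fun _ _ _ => rfl⟩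
    | mul g₁ g₂ _ _ ih₁ ih₂ =>
      obtain ⟨K₁, hK₁, h₁⟩ := ih₁
      obtain ⟨K₂, hK₂, h₂⟩ := ih₂
      refine ⟨K₁ ∪ K₂, hK₁.union hK₂, fun ν ν' h => ?_⟩
      have e₁ := h₁ ν ν' (fun φ a b cc => h φ a b (cc.trans Set.subset_union_left))
      have e₂ := h₂ ν ν' (fun φ a b cc => h φ a b (cc.trans Set.subset_union_right))
      show g₁ ν * g₂ ν = g₁ ν' * g₂ ν'
      rw [e₁, e₂]
    | smul a g _ ih =>
      obtain ⟨K₁, hK₁, h₁⟩ := ih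
      refine ⟨K₁, hK₁, fun ν ν' h => ?_⟩
      show a • g ν = a • g ν'
      rw [h₁ ν ν' h]
  -- Step 2: basic measures
  have hmE : MeasurableEmbedding (OnePoint.some : E → OnePoint E) :=
    aux_measurableEmbedding_some
  have hinfty_ms : MeasurableSet ({OnePoint.infty} : Set (OnePoint ↥E)) :=
    aux_measurableSet_infty
  set ν₀ : Measure (OnePoint ↥E) := νstar.toMeasure with hν₀def
  haveI hν₀fin : IsFiniteMeasure ν₀ := by rw [hν₀def]; infer_instance
  set νE : Measure (OnePoint ↥E) := ν₀.restrict {OnePoint.infty}ᶜ with hνEdef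
  haveI hνEfin : IsFiniteMeasure νE := by rw [hνEdef]; infer_instance
  set c : ℝ := (ν₀ {OnePoint.infty}).toReal with hcdef
  set V : ℝ := (νE Set.univ).toReal with hVdef
  have hc0 : 0 ≤ c := ENNReal.toReal_nonneg
  have hV0 : 0 ≤ V := ENNReal.toReal_nonneg
  have hν₀_split : ν₀ = νE + ν₀ {OnePoint.infty} • Measure.dirac OnePoint.infty := by
    conv_lhs => rw [← Measure.restrict_compl_add_restrict (μ := ν₀) hinfty_ms]
    rw [Measure.restrict_singleton, hνEdef]
  -- densities
  set Winv : OnePoint ↥E → ℝ≥0∞ := fun z => ENNReal.ofReal (winvOP w E z) with hWinvdef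
  set Wd : OnePoint ↥E → ℝ≥0∞ := fun z => z.elim 0 (fun y => ENNReal.ofReal (w y.1))
    with hWddef
  have hwE_meas : Measurable (fun y : E => w y.1) :=
    (hw_cont.comp continuous_subtype_val).measurable
  have hWf_meas : Measurable (fun y : ↥E => ENNReal.ofReal (w y.1)) :=
    ENNReal.measurable_ofReal.comp hwE_meas
  have hWinv_meas : Measurable Winv := by
    have heq : Winv = fun z : OnePoint ↥E =>
        z.elim 0 (fun y : E => ENNReal.ofReal (w y.1)⁻¹) := by
      funext z
      induction z using OnePoint.rec with
      | infty => simp [hWinvdef, winvOP]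
      | coe y => simp [hWinvdef, winvOP]
    rw [heq]
    exact aux_measurable_elim _ (ENNReal.measurable_ofReal.comp hwE_meas.inv)
  have hWd_meas : Measurable Wd :=
    aux_measurable_elim _ (ENNReal.measurable_ofReal.comp hwE_meas)
  set ρ : Measure (OnePoint ↥E) := ν₀.withDensity Winv with hρdef
  have hρ_univ : ρ Set.univ = 1 := by
    rw [hρdef, withDensity_apply _ MeasurableSet.univ, Measure.restrict_univ]
    exact hνstar
  have hρ_infty : ρ {OnePoint.infty} = 0 := by
    rw [hρdef, withDensity_apply _ hinfty_ms, lintegral_singleton' hWinv_meas]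
    simp [hWinvdef, winvOP]
  set μ0 : Measure ↥E := ρ.comap OnePoint.some with hμ0def
  have hrange : Set.range (OnePoint.some : E → OnePoint E) =
      ({OnePoint.infty} : Set (OnePoint ↥E))ᶜ := by
    rw [← OnePoint.compl_range_coe, compl_compl]
  have hμ0map : μ0.map OnePoint.some = ρ := by
    rw [hμ0def, hmE.map_comap]
    have h0 : ρ (Set.range (OnePoint.some : E → OnePoint E))ᶜ = 0 := by
      rw [hrange, compl_compl]; exact hρ_infty
    refine Measure.restrict_eq_self_of_ae_mem (MeasureTheory.ae_iff.mpr ?_)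
    simpa [Set.compl_def] using h0
  haveI hρfin : IsFiniteMeasure ρ := ⟨by rw [hρ_univ]; exact ENNReal.one_lt_top⟩
  have hμ0univ : μ0 Set.univ = 1 := by
    rw [hμ0def, hmE.comap_apply, Set.image_univ, hrange,
      measure_compl hinfty_ms (measure_ne_top _ _), hρ_infty, hρ_univ]
    simp
  haveI hμ0prob : IsProbabilityMeasure μ0 := ⟨hμ0univ⟩
  have hWdcomp : (fun x : E => ENNReal.ofReal (w x.1)) = Wd ∘ OnePoint.some := rfl
  have hTμ0 : (μ0.withDensity (fun x : E => ENNReal.ofReal (w x.1))).map OnePoint.some = νE := by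
    rw [hWdcomp, aux_map_withDensity hmE _ hWd_meas, hμ0map, hρdef,
      ← withDensity_mul _ hWinv_meas hWd_meas]
    have hprod : (Winv * Wd) =
        Set.indicator ({OnePoint.infty} : Set (OnePoint ↥E))ᶜ (fun _ => 1) := by
      funext z
      induction z using OnePoint.rec with
      | infty => simp [hWinvdef, hWddef, winvOP]
      | coe y =>
        have hy1 : (0:ℝ) < w y.1 := lt_of_lt_of_le one_pos (hw_one y.1)
        have hy : (OnePoint.some y : OnePoint ↥E) ∈
            ({OnePoint.infty} : Set (OnePoint ↥E))ᶜ := by simp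
        simp only [Pi.mul_apply, hWinvdef, hWddef, winvOP, Set.indicator_of_mem hy,
          OnePoint.elim_some]
        rw [← ENNReal.ofReal_mul (inv_nonneg.mpr hy1.le), inv_mul_cancel₀ hy1.ne',
          ENNReal.ofReal_one]
    rw [hprod, withDensity_indicator hinfty_ms.compl]
    exact withDensity_one
  -- Step 3: choice of escaping points
  obtain ⟨M, hM⟩ : ∃ M : ℝ, ∀ y ∈ K, w y ≤ M := by
    obtain ⟨M, hM⟩ := (hKcomp.image hw_cont).bddAbove
    exact ⟨M, fun y hy => hM (Set.mem_image_of_mem _ hy)⟩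
  have hsub : ∀ C : ℝ, ∃ x : ↥E, C < w x.1 := by
    intro C
    by_contra hcon
    push_neg at hcon
    apply hE_noncompact
    obtain ⟨S, hScomp, hSsub⟩ := mem_cocompact.mp
      (hw_infty.eventually (eventually_ge_atTop (C + 1)))
    have hclosed : IsClosed {y : EuclideanSpace ℝ (Fin d) | w y ≤ C} :=
      isClosed_Iic.preimage hw_cont
    have hsubS : {y : EuclideanSpace ℝ (Fin d) | w y ≤ C} ⊆ S := by
      intro y hy
      by_contra hyS
      have h2 := hSsub hyS
      simp only [Set.mem_setOf_eq] at h2 hy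
      linarith
    exact (hScomp.of_isClosed_subset hclosed hsubS).of_isClosed_subset hE_closed
      (fun y hy => hcon ⟨y, hy⟩)
  have hchoice : ∀ n : ℕ, ∃ x : ↥E, max M (V + c) + n + 1 ≤ w x.1 := by
    intro n
    obtain ⟨x, hx⟩ := hsub (max M (V + c) + n + 1)
    exact ⟨x, hx.le⟩
  choose x hx using hchoice
  have hxK : ∀ n, (x n).1 ∉ K := by
    intro n hmem
    have h1 := hM _ hmem
    have h2 := hx n
    have h3 : (0:ℝ) ≤ n := Nat.cast_nonneg n
    have h4 : M ≤ max M (V + c) := le_max_left _ _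
    linarith
  have hxW : ∀ n, V + c + n + 1 ≤ w (x n).1 := by
    intro n
    have h2 := hx n
    have h4 : V + c ≤ max M (V + c) := le_max_right _ _
    linarith
  set Wn : ℕ → ℝ := fun n => w (x n).1 - V with hWndef
  have hWn_pos : ∀ n : ℕ, (n : ℝ) + 1 ≤ Wn n := by
    intro n
    have := hxW n
    simp only [hWndef]
    linarith
  -- Step 4: the scaling factors
  have hr : ∀ n : ℕ, ∃ r : ℝ, 0 ≤ r ∧ r ≤ 1 ∧ r = Real.exp ((1 - r) * Wn n - c) := by
    intro n
    set g : ℝ → ℝ := fun s => Real.exp ((1 - s) * Wn n - c) - s with hgdef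
    have hgc : ContinuousOn g (Set.Icc 0 1) := by fun_prop
    have h0 : (0 : ℝ) ∈ Set.Icc (g 1) (g 0) := by
      constructor
      · have hg1 : g 1 = Real.exp (-c) - 1 := by simp [hgdef]
        rw [hg1]
        have := Real.exp_le_one_iff.mpr (neg_nonpos.mpr hc0)
        linarith
      · have hg0 : g 0 = Real.exp (Wn n - c) := by simp [hgdef]
        rw [hg0]
        positivity
    obtain ⟨s, hsI, hgs⟩ := intermediate_value_Icc' (by norm_num : (0:ℝ) ≤ 1) hgc h0
    refine ⟨s, hsI.1, hsI.2, ?_⟩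
    have hz : g s = 0 := hgs
    simp only [hgdef] at hz
    linarith
  choose r hr0 hr1 hreq using hr
  set t : ℕ → ℝ := fun n => 1 - r n with htdef
  have ht0 : ∀ n, 0 ≤ t n := fun n => by simp only [htdef]; linarith [hr1 n]
  have hlog : ∀ n, Real.log (r n) = (1 - r n) * Wn n - c := by
    intro n
    conv_lhs => rw [hreq n]
    exact Real.log_exp _
  have htb : ∀ n, t n * Wn n ≤ c := by
    intro n
    have h1 : Real.log (r n) ≤ 0 := Real.log_nonpos (hr0 n) (hr1 n)
    rw [hlog n] at h1
    simp only [htdef]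
    linarith
  have ht_small : ∀ n, t n ≤ c / (n + 1) := by
    intro n
    rw [le_div_iff₀ (by positivity : (0:ℝ) < (n:ℝ) + 1)]
    have h1 := htb n
    have h2 := hWn_pos n
    have h3 := ht0 n
    nlinarith
  have hrlim : Tendsto r atTop (𝓝 1) := by
    have hlb : ∀ n : ℕ, 1 - c / (n + 1) ≤ r n := by
      intro n
      have := ht_small n
      simp only [htdef] at this
      linarith
    have hdiv : Tendsto (fun n : ℕ => c / ((n:ℝ) + 1)) atTop (𝓝 0) :=
      Tendsto.div_atTop tendsto_const_nhds
        (tendsto_atTop_add_const_right _ 1 tendsto_natCast_atTop_atTop)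
    have hlow : Tendsto (fun n : ℕ => 1 - c / ((n:ℝ) + 1)) atTop (𝓝 1) := by
      simpa using tendsto_const_nhds.sub hdiv
    exact tendsto_of_tendsto_of_tendsto_of_le_of_le hlow tendsto_const_nhds hlb hr1
  have htlim : Tendsto t atTop (𝓝 0) := by
    simp only [htdef]
    simpa using (tendsto_const_nhds (x := (1:ℝ))).sub hrlim
  have hloglim : Tendsto (fun n => Real.log (r n)) atTop (𝓝 0) := by
    have := (Real.continuousAt_log one_ne_zero).tendsto.comp hrlim
    simpa [Function.comp_def] using this
  have htw : ∀ n, t n * w (x n).1 = Real.log (r n) + c + t n * V := by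
    intro n
    have h' : t n * Wn n = Real.log (r n) + c := by
      rw [hlog n]; simp only [htdef]; ring
    have hw' : w (x n).1 = Wn n + V := by simp only [hWndef]; ring
    rw [hw']
    calc t n * (Wn n + V) = t n * Wn n + t n * V := by ring
      _ = Real.log (r n) + c + t n * V := by rw [h']
  have htwlim : Tendsto (fun n => t n * w (x n).1) atTop (𝓝 c) := by
    simp only [htw]
    have h5 : Tendsto (fun n => Real.log (r n) + c + t n * V) atTop (𝓝 (0 + c + 0 * V)) :=
      (hloglim.add tendsto_const_nhds).add (htlim.mul tendsto_const_nhds)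
    simpa using h5
  have hw0 : ∀ y : ↥E, (0:ℝ) ≤ w y.1 := fun y => le_trans zero_le_one (hw_one y.1)
  have htw0 : ∀ n, 0 ≤ t n * w (x n).1 := fun n => mul_nonneg (ht0 n) (hw0 (x n))
  -- Step 5: the approximating measures
  set σ : ℕ → Measure (OnePoint ↥E) := fun n =>
    ENNReal.ofReal (r n) • νE +
      ENNReal.ofReal (t n * w (x n).1) • Measure.dirac (OnePoint.some (x n)) with hσdef
  have hsm1 : ∀ n, (ENNReal.ofReal (r n) • νE) Set.univ < ⊤ := by
    intro n
    simp only [Measure.smul_apply, smul_eq_mul]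
    exact ENNReal.mul_lt_top ENNReal.ofReal_lt_top (measure_lt_top νE _)
  have hsm2 : ∀ n, (ENNReal.ofReal (t n * w (x n).1) •
      Measure.dirac (OnePoint.some (x n))) Set.univ < ⊤ := by
    intro n
    simp only [Measure.smul_apply, smul_eq_mul]
    rw [measure_univ, mul_one]
    exact ENNReal.ofReal_lt_top
  have hσfin : ∀ n, IsFiniteMeasure (σ n) := by
    intro n
    refine ⟨?_⟩
    rw [show σ n = ENNReal.ofReal (r n) • νE +
      ENNReal.ofReal (t n * w (x n).1) • Measure.dirac (OnePoint.some (x n)) from rfl,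
      Measure.add_apply]
    exact ENNReal.add_lt_top.2 ⟨hsm1 n, hsm2 n⟩
  set νs : ℕ → FiniteMeasure (OnePoint ↥E) := fun n => ⟨σ n, hσfin n⟩ with hνsdef
  -- integral computations
  have hIntSigma : ∀ (g : BoundedContinuousFunction (OnePoint ↥E) ℝ) n, ∫ z, g z ∂(σ n) =
      r n * ∫ z, g z ∂νE + (t n * w (x n).1) * g (OnePoint.some (x n)) := by
    intro g n
    haveI i1 : IsFiniteMeasure (ENNReal.ofReal (r n) • νE) := ⟨hsm1 n⟩
    haveI i2 : IsFiniteMeasure (ENNReal.ofReal (t n * w (x n).1) •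
      Measure.dirac (OnePoint.some (x n))) := ⟨hsm2 n⟩
    rw [show σ n = ENNReal.ofReal (r n) • νE +
      ENNReal.ofReal (t n * w (x n).1) • Measure.dirac (OnePoint.some (x n)) from rfl]
    rw [integral_add_measure (g.integrable (μ := ENNReal.ofReal (r n) • νE))
        (g.integrable (μ := ENNReal.ofReal (t n * w (x n).1) •
          Measure.dirac (OnePoint.some (x n)))),
      integral_smul_measure, integral_smul_measure, integral_dirac,
      ENNReal.toReal_ofReal (hr0 n), ENNReal.toReal_ofReal (htw0 n)]
    simp [smul_eq_mul]
  haveI hsm3 : IsFiniteMeasure ((ν₀ {OnePoint.infty}) •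
      Measure.dirac (OnePoint.infty : OnePoint ↥E)) := by
    refine ⟨?_⟩
    simp only [Measure.smul_apply, smul_eq_mul]
    rw [measure_univ (μ := Measure.dirac (OnePoint.infty : OnePoint ↥E)), mul_one]
    exact measure_lt_top ν₀ _
  have hIntStar : ∀ g : BoundedContinuousFunction (OnePoint ↥E) ℝ,
      ∫ z, g z ∂ν₀ = ∫ z, g z ∂νE + c * g OnePoint.infty := by
    intro g
    conv_lhs => rw [hν₀_split]
    rw [integral_add_measure (g.integrable (μ := νE))
        (g.integrable (μ := (ν₀ {OnePoint.infty}) •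
          Measure.dirac (OnePoint.infty : OnePoint ↥E))), integral_smul_measure,
      integral_dirac]
    rw [hcdef]
    simp [smul_eq_mul]
  -- masses
  have hmass_n : ∀ n, ((σ n) Set.univ).toReal = r n * V + t n * w (x n).1 := by
    intro n
    rw [show σ n = ENNReal.ofReal (r n) • νE +
      ENNReal.ofReal (t n * w (x n).1) • Measure.dirac (OnePoint.some (x n)) from rfl]
    simp only [Measure.add_apply, Measure.smul_apply, smul_eq_mul]
    rw [measure_univ (μ := Measure.dirac (OnePoint.some (x n))), mul_one,
      ENNReal.toReal_add (ENNReal.mul_ne_top ENNReal.ofReal_ne_top (measure_ne_top νE _))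
        ENNReal.ofReal_ne_top,
      ENNReal.toReal_mul, ENNReal.toReal_ofReal (hr0 n), ENNReal.toReal_ofReal (htw0 n), hVdef]
  have hmass_star : (ν₀ Set.univ).toReal = V + c := by
    have h8 : ν₀ Set.univ = νE Set.univ + ν₀ {OnePoint.infty} := by
      conv_lhs => rw [hν₀_split]
      rw [Measure.add_apply, Measure.smul_apply, smul_eq_mul,
        measure_univ (μ := Measure.dirac (OnePoint.infty : OnePoint ↥E)), mul_one]
    rw [h8, ENNReal.toReal_add (measure_ne_top _ _) (measure_ne_top _ _), hVdef, hcdef]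
  refine ⟨νs, ?_, ?_, ?_⟩
  · -- the measures are in the image of T
    intro n
    set μn : Measure ↥E := ENNReal.ofReal (r n) • μ0 +
      ENNReal.ofReal (t n) • Measure.dirac (x n) with hμndef
    have hdiracuniv : Measure.dirac (x n) Set.univ = 1 := measure_univ
    have hμnuniv : μn Set.univ = 1 := by
      rw [hμndef]
      simp only [Measure.add_apply, Measure.smul_apply, smul_eq_mul, hμ0univ, hdiracuniv,
        mul_one]
      rw [← ENNReal.ofReal_add (hr0 n) (ht0 n)]
      have h9 : r n + t n = 1 := by simp only [htdef]; ring
      rw [h9, ENNReal.ofReal_one]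
    have hμ0w : ∫⁻ y, ENNReal.ofReal (w y.1) ∂μ0 = νE Set.univ := by
      have h7 := congrArg (fun m : Measure (OnePoint ↥E) => m Set.univ) hTμ0
      rw [Measure.map_apply hmE.measurable MeasurableSet.univ, Set.preimage_univ,
        withDensity_apply _ MeasurableSet.univ, Measure.restrict_univ] at h7
      exact h7
    refine ⟨μn, ⟨hμnuniv⟩, ?_, ?_⟩
    · refine ⟨(hw_cont.comp continuous_subtype_val).aestronglyMeasurable, ?_⟩
      rw [hasFiniteIntegral_iff_ofReal (Filter.Eventually.of_forall fun y => hw0 y)]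
      rw [hμndef, lintegral_add_measure, lintegral_smul_measure, lintegral_smul_measure,
        lintegral_dirac' _ hWf_meas, hμ0w]
      exact ENNReal.add_lt_top.2
        ⟨ENNReal.mul_lt_top ENNReal.ofReal_lt_top (measure_lt_top _ _),
          ENNReal.mul_lt_top ENNReal.ofReal_lt_top ENNReal.ofReal_lt_top⟩
    · show σ n = (μn.withDensity (fun x : ↥E => ENNReal.ofReal (w x.1))).map OnePoint.some
      rw [hμndef, withDensity_add_measure, withDensity_smul_measure, withDensity_smul_measure,
        aux_withDensity_dirac _ hWf_meas,
        Measure.map_add _ _ hmE.measurable, Measure.map_smul, Measure.map_smul, hTμ0,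
        Measure.map_smul, Measure.map_dirac' hmE.measurable, hσdef]
      rw [smul_smul, ← ENNReal.ofReal_mul (ht0 n)]
  · -- weak convergence
    apply FiniteMeasure.tendsto_of_forall_integral_tendsto
    intro g
    have hxtend : Tendsto (fun n => (OnePoint.some (x n) : OnePoint ↥E)) atTop
        (𝓝 OnePoint.infty) := by
      apply OnePoint.tendsto_coe_infty.comp
      rw [hasBasis_coclosedCompact.tendsto_right_iff]
      rintro s ⟨hscl, hscomp⟩
      obtain ⟨Ms, hMs⟩ := (hscomp.image (hw_cont.comp continuous_subtype_val)).bddAbove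
      filter_upwards [eventually_ge_atTop ⌈Ms⌉₊] with n hn
      simp only [Set.mem_compl_iff]
      intro hmem
      have h1 : w (x n).1 ≤ Ms := hMs (Set.mem_image_of_mem _ hmem)
      have h2 := hx n
      have h3 : Ms ≤ (⌈Ms⌉₊ : ℝ) := Nat.le_ceil Ms
      have h4 : ((⌈Ms⌉₊ : ℕ) : ℝ) ≤ (n : ℝ) := Nat.cast_le.mpr hn
      have h5 : (0:ℝ) ≤ max M (V + c) := le_trans (by linarith) (le_max_right M (V + c))
      linarith
    have hgoal : Tendsto (fun n => r n * ∫ z, g z ∂νE + (t n * w (x n).1) *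
        g (OnePoint.some (x n))) atTop (𝓝 (1 * ∫ z, g z ∂νE + c * g OnePoint.infty)) :=
      (hrlim.mul tendsto_const_nhds).add
        (htwlim.mul ((g.continuous.tendsto OnePoint.infty).comp hxtend))
    have hIS := hIntStar g
    have hco : ∀ n, ((νs n : FiniteMeasure (OnePoint ↥E)) : Measure (OnePoint ↥E)) = σ n :=
      fun n => rfl
    simp only [hco, hIntSigma g]
    rw [show ((νstar : Measure (OnePoint ↥E))) = ν₀ from rfl, hIS]
    simpa using hgoal
  · -- equality of f-values
    intro n
    apply hP (νs n) νstar
    intro φ hφ1 hφ2 hφK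
    have hφcont : Continuous φ := hφ1.continuous
    have htsupp : IsCompact ((Subtype.val : ↥E → _) ⁻¹' tsupport φ) :=
      (hE_closed.isClosedEmbedding_subtypeVal.isProperMap).isCompact_preimage hφ2
    have hφE : Tendsto (fun y : ↥E => φ y.1) (coclosedCompact ↥E) (𝓝 0) := by
      have hmem : ((Subtype.val : ↥E → _) ⁻¹' tsupport φ)ᶜ ∈ coclosedCompact ↥E :=
        hasBasis_coclosedCompact.mem_of_mem
          ⟨(isClosed_tsupport φ).preimage continuous_subtype_val, htsupp⟩
      refine Tendsto.congr' ?_ tendsto_const_nhds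
      refine Filter.eventuallyEq_of_mem hmem fun y hy => ?_
      exact (image_eq_zero_of_notMem_tsupport hy).symm
    obtain ⟨Cb, hCb⟩ := hφ2.exists_bound_of_continuous hφcont
    have hCb0 : 0 ≤ Cb := le_trans (norm_nonneg _) (hCb 0)
    set φb : BoundedContinuousFunction (OnePoint ↥E) ℝ := BoundedContinuousFunction.ofNormedAddCommGroup
      (fun z : OnePoint ↥E => z.elim 0 (fun y => φ y.1))
      (by rw [OnePoint.continuous_iff]
          exact ⟨hφE, hφcont.comp continuous_subtype_val⟩)
      Cb
      (by intro z
          induction z using OnePoint.rec with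
          | infty => simpa using hCb0
          | coe y => simpa using hCb y.1) with hφbdef
    have hφbcoe : ⇑φb = fun z : OnePoint ↥E => z.elim 0 (fun y => φ y.1) := rfl
    have hφbx : φb (OnePoint.some (x n)) = 0 := by
      show φ (x n).1 = 0
      exact image_eq_zero_of_notMem_tsupport (fun h => hxK n (hφK h))
    have hφbinf : φb OnePoint.infty = 0 := rfl
    have hexp : Real.exp (((σ n) Set.univ).toReal - (ν₀ Set.univ).toReal) = r n := by
      have harg : r n * V + t n * w (x n).1 - (V + c) = (1 - r n) * Wn n - c := by
        have hw' : w (x n).1 = Wn n + V := by simp only [hWndef]; ring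
        rw [hw']
        simp only [htdef]
        ring
      rw [hmass_n n, hmass_star, harg, ← hreq n]
    have hstar_int : ∫ z, φb z ∂ν₀ = ∫ z, φb z ∂νE := by
      rw [hIntStar φb, hφbinf, mul_zero, add_zero]
    show ∫ z, φb z ∂(σ n) =
      Real.exp (((σ n) Set.univ).toReal - (ν₀ Set.univ).toReal) * ∫ z, φb z ∂ν₀
    rw [hIntSigma φb n, hφbx, hexp, hstar_int]
    ring
end
end

section
/- Let f̃ ∈ 𝒟 and let G : 𝒳 → ℝ be continuous. Assume that G(T(μ)) ≤ 0 for every μ ∈ 𝒫_w such that f̃(T(μ)) = sup_{T(𝒫_w)} f̃ ≥ 0. Then G(ν*) ≤ 0 for every ν* ∈ 𝒳 such that f̃(ν*) = sup_𝒳 f̃ ≥ 0. In particular, if a linear operator L : 𝒟_w → C(𝒫_w) satisfies the positive maximum principle on 𝒫_w and each L(f̃ ∘ T) extends to a continuous function L̃f̃ on 𝒳, then the operator L̃ satisfies the positive maximum principle on 𝒳. -/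
open MeasureTheory Filter Topology
open scoped NNReal ENNReal

noncomputable section

/-- The state space `𝒳 = {ν ∈ M_+(E^Δ) : ⟨w⁻¹,ν⟩ = 1}`, as a subtype of the space of finite
measures on `E^Δ` with the topology of weak convergence. -/
def XSp {d : ℕ} (w : EuclideanSpace ℝ (Fin d) → ℝ) (E : Set (EuclideanSpace ℝ (Fin d))) :
    Type :=
  {ν : FiniteMeasure (OnePoint E) //
    (∫⁻ x, ENNReal.ofReal (winvOP w E x) ∂ν.toMeasure) = 1}

instance {d : ℕ} (w : EuclideanSpace ℝ (Fin d) → ℝ) (E : Set (EuclideanSpace ℝ (Fin d))) :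
    TopologicalSpace (XSp w E) :=
  instTopologicalSpaceSubtype

/-- Membership in `T(𝒫_w)`. -/
def MemTPw {d : ℕ} (w : EuclideanSpace ℝ (Fin d) → ℝ) (E : Set (EuclideanSpace ℝ (Fin d)))
    (ν : FiniteMeasure (OnePoint E)) : Prop :=
  ∃ μ : Measure E, IsProbabilityMeasure μ ∧ Integrable (fun x : E => w x.1) μ ∧
    ν.toMeasure = (μ.withDensity (fun x => ENNReal.ofReal (w x.1))).map OnePoint.some

section Aux
variable {d : ℕ} {w : EuclideanSpace ℝ (Fin d) → ℝ} {E : Set (EuclideanSpace ℝ (Fin d))}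

/-- extension by 0 at ∞ of a function tending to 0 at infinity is continuous -/
lemma cont_elim (g : E → ℝ) (hg : Continuous g)
    (h0 : Tendsto g (coclosedCompact E) (𝓝 0)) :
    Continuous (fun z : OnePoint E => z.elim 0 g) := by
  rw [OnePoint.continuous_iff]
  exact ⟨h0, hg⟩

lemma winvOP_continuous (hw : Continuous w) (hw_one : ∀ x, 1 ≤ w x)
    (hw_infty : Tendsto w (cocompact (EuclideanSpace ℝ (Fin d))) atTop)
    (hE_closed : IsClosed E) : Continuous (winvOP w E) := by
  apply cont_elim
  · exact (hw.comp continuous_subtype_val).inv₀ (fun y => by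
      have := hw_one y.1; positivity)
  · rw [coclosedCompact_eq_cocompact]
    have h1 : Tendsto (fun y : E => w y.1) (cocompact E) atTop :=
      hw_infty.comp (hE_closed.isClosedEmbedding_subtypeVal.tendsto_cocompact)
    exact h1.inv_tendsto_atTop

lemma elim_cont_of_compact_support (φ : EuclideanSpace ℝ (Fin d) → ℝ) (hφc : Continuous φ)
    (hφs : HasCompactSupport φ) (hE_closed : IsClosed E) :
    Continuous (fun z : OnePoint E => z.elim 0 (fun y : E => φ y.1)) := by
  apply cont_elim _ (hφc.comp continuous_subtype_val)
  have hev : (fun y : E => φ y.1) =ᶠ[coclosedCompact E] 0 := by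
    rw [coclosedCompact_eq_cocompact]
    have hK : IsCompact ((Subtype.val : E → _) ⁻¹' tsupport φ) :=
      hE_closed.isClosedEmbedding_subtypeVal.isCompact_preimage hφs
    filter_upwards [hK.compl_mem_cocompact] with y hy
    rw [Set.mem_compl_iff, Set.mem_preimage] at hy
    exact image_eq_zero_of_notMem_tsupport hy
  exact (tendsto_congr' hev).2 tendsto_const_nhds

end Aux


section Aux2
variable {d : ℕ} {w : EuclideanSpace ℝ (Fin d) → ℝ} {E : Set (EuclideanSpace ℝ (Fin d))}

lemma me_coe : MeasurableEmbedding ((↑) : E → OnePoint E) :=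
  OnePoint.isOpenEmbedding_coe.measurableEmbedding

lemma measurableSet_infty : MeasurableSet {(OnePoint.infty : OnePoint E)} := by
  rw [← OnePoint.compl_range_coe]
  exact me_coe.measurableSet_range.compl

variable (hw_cont : Continuous w) (hw_one : ∀ x, 1 ≤ w x)
    (hw_infty : Tendsto w (cocompact (EuclideanSpace ℝ (Fin d))) atTop)
    (hE_closed : IsClosed E)

include hw_cont hw_one hw_infty hE_closed

lemma winvOP_meas : Measurable (fun z => ENNReal.ofReal (winvOP w E z)) :=
  ENNReal.measurable_ofReal.comp (winvOP_continuous hw_cont hw_one hw_infty hE_closed).measurable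

/-- characterization: a finite measure with no mass at ∞ and ⟨w⁻¹,ν⟩ = 1 is in T(𝒫_w). -/
lemma memTPw_of_infty_null (ν : FiniteMeasure (OnePoint E))
    (h0 : ν.toMeasure {(OnePoint.infty : OnePoint E)} = 0)
    (h1 : (∫⁻ x, ENNReal.ofReal (winvOP w E x) ∂ν.toMeasure) = 1) :
    MemTPw w E ν := by
  have hwmeas : Measurable (fun x : E => ENNReal.ofReal (w x.1)) :=
    ENNReal.measurable_ofReal.comp (hw_cont.comp continuous_subtype_val).measurable
  have hwinvmeas : Measurable (fun x : E => ENNReal.ofReal (w x.1)⁻¹) :=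
    ENNReal.measurable_ofReal.comp
      ((hw_cont.comp continuous_subtype_val).inv₀ (fun y => by have := hw_one y.1; positivity)).measurable
  set μ₀ : Measure E := Measure.comap (↑) ν.toMeasure with hμ₀
  have hmapcomap : μ₀.map (↑) = ν.toMeasure := by
    rw [me_coe.map_comap]
    apply Measure.restrict_eq_self_of_ae_mem
    rw [Filter.eventually_iff, mem_ae_iff, Set.setOf_mem_eq, OnePoint.compl_range_coe]
    exact h0
  set μ : Measure E := μ₀.withDensity (fun x => ENNReal.ofReal (w x.1)⁻¹) with hμ
  have hlint : ∀ (g : OnePoint E → ℝ≥0∞),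
      ∫⁻ x, g ((x : OnePoint E)) ∂μ₀ = ∫⁻ z, g z ∂ν.toMeasure := by
    intro g
    rw [← hmapcomap, me_coe.lintegral_map g]
  have hμuniv : μ Set.univ = 1 := by
    rw [hμ, withDensity_apply _ MeasurableSet.univ, Measure.restrict_univ, ← h1,
      ← hlint (fun z => ENNReal.ofReal (winvOP w E z))]
    rfl
  have hprob : IsProbabilityMeasure μ := ⟨hμuniv⟩
  have hback : μ.withDensity (fun x => ENNReal.ofReal (w x.1)) = μ₀ := by
    rw [hμ, ← withDensity_mul _ hwinvmeas hwmeas]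
    have hpt : ((fun x : E => ENNReal.ofReal (w x.1)⁻¹) * fun x : E => ENNReal.ofReal (w x.1))
        =ᵐ[μ₀] (fun _ => (1:ℝ≥0∞)) := by
      apply ae_of_all
      intro x
      have hx : (0:ℝ) < w x.1 := lt_of_lt_of_le one_pos (hw_one x.1)
      simp only [Pi.mul_apply]
      rw [← ENNReal.ofReal_mul (by positivity), inv_mul_cancel₀ (ne_of_gt hx)]
      simp
    rw [withDensity_congr_ae hpt]
    have : (fun _ : E => (1:ℝ≥0∞)) = 1 := rfl
    rw [this, withDensity_one]
  refine ⟨μ, hprob, ⟨(hw_cont.comp continuous_subtype_val).aestronglyMeasurable, ?_⟩, ?_⟩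
  · rw [hasFiniteIntegral_iff_ofReal
      (Eventually.of_forall (fun x : E => le_trans zero_le_one (hw_one x.1)))]
    have h2 : ∫⁻ x : E, ENNReal.ofReal (w x.1) ∂μ = μ₀ Set.univ := by
      rw [hμ, lintegral_withDensity_eq_lintegral_mul _ hwinvmeas hwmeas]
      have hpt : ∀ x : E, ((fun x : E => ENNReal.ofReal (w x.1)⁻¹) *
          fun x : E => ENNReal.ofReal (w x.1)) x = 1 := by
        intro x
        have hx : (0:ℝ) < w x.1 := lt_of_lt_of_le one_pos (hw_one x.1)
        simp only [Pi.mul_apply]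
        rw [← ENNReal.ofReal_mul (by positivity), inv_mul_cancel₀ (ne_of_gt hx)]
        simp
      rw [lintegral_congr hpt, lintegral_one]
    rw [h2]
    have h3 : μ₀ Set.univ = ν.toMeasure (Set.range ((↑) : E → OnePoint E)) := by
      rw [← hmapcomap, me_coe.map_apply]
      congr 1
      exact (Set.preimage_range _).symm ▸ rfl
    calc μ₀ Set.univ ≤ ν.toMeasure Set.univ := by
          rw [h3]; exact measure_mono (Set.subset_univ _)
      _ < ⊤ := measure_lt_top _ _
  · rw [hback, hmapcomap]

lemma lintegral_winvOP_eq_one_of_memTPw (ν : FiniteMeasure (OnePoint E))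
    (h : MemTPw w E ν) :
    (∫⁻ x, ENNReal.ofReal (winvOP w E x) ∂ν.toMeasure) = 1 := by
  obtain ⟨μ, hprob, hint, hmap⟩ := h
  have hwmeas : Measurable (fun x : E => ENNReal.ofReal (w x.1)) :=
    ENNReal.measurable_ofReal.comp (hw_cont.comp continuous_subtype_val).measurable
  have hgmeas : Measurable (fun x : E => ENNReal.ofReal (winvOP w E (x : OnePoint E))) :=
    (winvOP_meas hw_cont hw_one hw_infty hE_closed).comp me_coe.measurable
  rw [hmap, me_coe.lintegral_map (fun z => ENNReal.ofReal (winvOP w E z)),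
    lintegral_withDensity_eq_lintegral_mul _ hwmeas hgmeas]
  have hpt : ∀ x : E, ((fun x : E => ENNReal.ofReal (w x.1)) *
      fun x : E => ENNReal.ofReal (winvOP w E (x : OnePoint E))) x = 1 := by
    intro x
    have hx : (0:ℝ) < w x.1 := lt_of_lt_of_le one_pos (hw_one x.1)
    simp only [Pi.mul_apply]
    show ENNReal.ofReal (w x.1) * ENNReal.ofReal ((w x.1)⁻¹) = 1
    rw [← ENNReal.ofReal_mul (le_of_lt hx), mul_inv_cancel₀ (ne_of_gt hx)]
    simp
  rw [lintegral_congr hpt, lintegral_one]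
  exact hprob.measure_univ

end Aux2

section Aux3
variable {d : ℕ} {E : Set (EuclideanSpace ℝ (Fin d))}

/-- the basic observables -/
def Iobs (φ : EuclideanSpace ℝ (Fin d) → ℝ) (ν : FiniteMeasure (OnePoint E)) : ℝ :=
  (∫ x, (x.elim 0 (fun y : E => φ y.1)) ∂ν.toMeasure) *
      Real.exp (-(ν.toMeasure Set.univ).toReal)

/-- invariance of an element of the algebra under equality of all observables with support
in a fixed ball -/
def InvR (R : ℝ) (f : FiniteMeasure (OnePoint E) → ℝ) : Prop :=
  ∀ ν ν' : FiniteMeasure (OnePoint E),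
    (∀ φ : EuclideanSpace ℝ (Fin d) → ℝ, ContDiff ℝ (⊤ : ℕ∞) φ → HasCompactSupport φ →
      tsupport φ ⊆ Metric.closedBall 0 R → Iobs φ ν = Iobs φ ν') → f ν = f ν'

lemma invR_mono {R R' : ℝ} (h : R ≤ R') {f : FiniteMeasure (OnePoint E) → ℝ}
    (hf : InvR R f) : InvR R' f := by
  intro ν ν' hφ
  exact hf ν ν' (fun φ h1 h2 h3 => hφ φ h1 h2 (h3.trans (Metric.closedBall_subset_closedBall h)))

lemma exists_invR {f : FiniteMeasure (OnePoint E) → ℝ}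
    (hf : f ∈ NonUnitalAlgebra.adjoin ℝ (DGen E)) : ∃ R : ℝ, InvR R f := by
  induction hf using NonUnitalAlgebra.adjoin_induction with
  | mem g hg =>
      obtain ⟨φ, hφ1, hφ2, rfl⟩ := hg
      obtain ⟨R, hR⟩ := hφ2.isBounded.subset_closedBall 0
      exact ⟨R, fun ν ν' h => h φ hφ1 hφ2 hR⟩
  | add x y hx hy ihx ihy =>
      obtain ⟨R1, h1⟩ := ihx; obtain ⟨R2, h2⟩ := ihy
      refine ⟨max R1 R2, fun ν ν' h => ?_⟩
      simp only [Pi.add_apply]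
      rw [invR_mono (le_max_left R1 R2) h1 ν ν' h, invR_mono (le_max_right R1 R2) h2 ν ν' h]
  | zero => exact ⟨0, fun ν ν' _ => rfl⟩
  | mul x y hx hy ihx ihy =>
      obtain ⟨R1, h1⟩ := ihx; obtain ⟨R2, h2⟩ := ihy
      refine ⟨max R1 R2, fun ν ν' h => ?_⟩
      simp only [Pi.mul_apply]
      rw [invR_mono (le_max_left R1 R2) h1 ν ν' h, invR_mono (le_max_right R1 R2) h2 ν ν' h]
  | smul r x hx ihx =>
      obtain ⟨R1, h1⟩ := ihx
      refine ⟨R1, fun ν ν' h => ?_⟩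
      simp only [Pi.smul_apply]
      rw [h1 ν ν' h]

end Aux3

section Aux4
variable {d : ℕ} {E : Set (EuclideanSpace ℝ (Fin d))}

lemma cont_integrable {h : OnePoint E → ℝ} (hc : Continuous h) (μ : Measure (OnePoint E))
    [IsFiniteMeasure μ] : Integrable h μ :=
  hc.integrable_of_hasCompactSupport ((isClosed_tsupport _).isCompact)

/-- splitting an integral into the part on `E` and the atom at `∞`. -/
lemma integral_split (ν : Measure (OnePoint E)) [IsFiniteMeasure ν] {h : OnePoint E → ℝ}
    (hc : Continuous h) :
    ∫ z, h z ∂ν = (∫ z, h z ∂(ν.restrict {(OnePoint.infty : OnePoint E)}ᶜ))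
      + (ν {(OnePoint.infty : OnePoint E)}).toReal * h OnePoint.infty := by
  have hint : Integrable h ν := cont_integrable hc ν
  rw [← integral_add_compl (measurableSet_infty (E := E)) hint]
  rw [Measure.restrict_singleton, integral_smul_measure,
    integral_dirac' h _ hc.stronglyMeasurable, smul_eq_mul]
  ring

/-- integral against the perturbed measure -/
lemma integral_perturbed (νE : Measure (OnePoint E)) [IsFiniteMeasure νE]
    (z : OnePoint E) (a b : ℝ) (ha : 0 ≤ a) (hb : 0 ≤ b) {h : OnePoint E → ℝ}
    (hc : Continuous h) :
    ∫ x, h x ∂(ENNReal.ofReal a • νE + ENNReal.ofReal b • Measure.dirac z)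
      = a * ∫ x, h x ∂νE + b * h z := by
  have h1 : Integrable h (ENNReal.ofReal a • νE) :=
    (cont_integrable hc νE).smul_measure ENNReal.ofReal_ne_top
  have h2 : Integrable h ((ENNReal.ofReal b) • Measure.dirac z) :=
    (cont_integrable hc (Measure.dirac z)).smul_measure ENNReal.ofReal_ne_top
  rw [integral_add_measure h1 h2, integral_smul_measure, integral_smul_measure,
    integral_dirac' h _ hc.stronglyMeasurable, ENNReal.toReal_ofReal ha,
    ENNReal.toReal_ofReal hb]
  simp [smul_eq_mul]

end Aux4

section Aux5
variable {d : ℕ} {E : Set (EuclideanSpace ℝ (Fin d))}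

lemma lintegral_perturbed (νE : Measure (OnePoint E)) (z : OnePoint E) (a b : ℝ)
    {g : OnePoint E → ℝ≥0∞} (hg : Measurable g) :
    ∫⁻ x, g x ∂(ENNReal.ofReal a • νE + ENNReal.ofReal b • Measure.dirac z)
      = ENNReal.ofReal a * ∫⁻ x, g x ∂νE + ENNReal.ofReal b * g z := by
  rw [lintegral_add_measure, lintegral_smul_measure, lintegral_smul_measure,
    lintegral_dirac' z hg, smul_eq_mul, smul_eq_mul]

end Aux5

/-- Let `f̃ ∈ 𝒟` and `G : 𝒳 → ℝ` continuous.  If `G(T(μ)) ≤ 0` whenever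
`f̃(T(μ)) = sup_{T(𝒫_w)} f̃ ≥ 0`, then `G(ν*) ≤ 0` for every `ν* ∈ 𝒳` with
`f̃(ν*) = sup_𝒳 f̃ ≥ 0`.  (This is the key step showing the positive maximum principle
transfers from `𝒫_w` to `𝒳`.) -/
theorem stmt_10 {d : ℕ} (w : EuclideanSpace ℝ (Fin d) → ℝ)
    (hw_smooth : ContDiff ℝ (⊤ : ℕ∞) w) (hw_one : ∀ x, 1 ≤ w x)
    (hw_infty : Tendsto w (cocompact (EuclideanSpace ℝ (Fin d))) atTop)
    (E : Set (EuclideanSpace ℝ (Fin d))) (hE_closed : IsClosed E) (hE_noncompact : ¬ IsCompact E)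
    (f : FiniteMeasure (OnePoint E) → ℝ) (hf : f ∈ NonUnitalAlgebra.adjoin ℝ (DGen E))
    (G : XSp w E → ℝ) (hG : Continuous G)
    (hyp : ∀ (ν : FiniteMeasure (OnePoint E))
      (hν : (∫⁻ x, ENNReal.ofReal (winvOP w E x) ∂ν.toMeasure) = 1),
      MemTPw w E ν →
      (∀ ν' : FiniteMeasure (OnePoint E), MemTPw w E ν' → f ν' ≤ f ν) →
      0 ≤ f ν → G ⟨ν, hν⟩ ≤ 0) :
    ∀ (νstar : FiniteMeasure (OnePoint E))
      (hνstar : (∫⁻ x, ENNReal.ofReal (winvOP w E x) ∂νstar.toMeasure) = 1),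
      (∀ ν' : FiniteMeasure (OnePoint E),
        (∫⁻ x, ENNReal.ofReal (winvOP w E x) ∂ν'.toMeasure) = 1 → f ν' ≤ f νstar) →
      0 ≤ f νstar → G ⟨νstar, hνstar⟩ ≤ 0 := by
  intro νstar hνstar hmax hpos
  have hw_cont : Continuous w := hw_smooth.continuous
  have hwOPc : Continuous (winvOP w E) := winvOP_continuous hw_cont hw_one hw_infty hE_closed
  have hwOPm : Measurable (fun z => ENNReal.ofReal (winvOP w E z)) :=
    ENNReal.measurable_ofReal.comp hwOPc.measurable
  obtain ⟨R, hR⟩ := exists_invR hf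
  set S : Set (OnePoint E) := {(OnePoint.infty : OnePoint E)} with hS
  have mS : MeasurableSet S := measurableSet_infty
  set ν : Measure (OnePoint E) := νstar.toMeasure with hν
  set νE : Measure (OnePoint E) := ν.restrict Sᶜ with hνE
  haveI : IsFiniteMeasure νE := by
    rw [hνE]; infer_instance
  set c : ℝ := (ν S).toReal with hc
  set mE : ℝ := (νE Set.univ).toReal with hmE
  have hc0 : 0 ≤ c := ENNReal.toReal_nonneg
  have hmE0 : 0 ≤ mE := ENNReal.toReal_nonneg
  -- mass of ν
  have hνEuniv : νE Set.univ = ν Sᶜ := by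
    rw [hνE, Measure.restrict_apply MeasurableSet.univ, Set.univ_inter]
  have hmass : (ν Set.univ).toReal = mE + c := by
    have h2 : ν Set.univ = ν Sᶜ + ν S := by
      rw [add_comm, measure_add_measure_compl mS]
    rw [h2, ENNReal.toReal_add (measure_ne_top _ _) (measure_ne_top _ _), hmE, hνEuniv]
  -- ⟨w⁻¹, νE⟩ = 1
  have hlint_νE : (∫⁻ x, ENNReal.ofReal (winvOP w E x) ∂νE) = 1 := by
    have hsplit := lintegral_add_compl (fun x => ENNReal.ofReal (winvOP w E x)) mS (μ := ν)
    have hzero : ∫⁻ x in S, ENNReal.ofReal (winvOP w E x) ∂ν = 0 := by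
      rw [hS, Measure.restrict_singleton, lintegral_smul_measure, lintegral_dirac' _ hwOPm]
      have : winvOP w E OnePoint.infty = 0 := rfl
      rw [this]
      simp
    rw [hzero, zero_add] at hsplit
    rw [← hνstar, ← hsplit]
  -- choose points escaping to infinity with large `w`
  set A : ℝ := 2 * (c + 1) + (c + 1) * mE + 2 with hA
  have hA2 : 2 ≤ A := by nlinarith [hc0, hmE0, mul_nonneg (by linarith : (0:ℝ) ≤ c+1) hmE0]
  have hyex : ∀ n : ℕ, ∃ y : E, ((n : ℝ) + A ≤ w y.1) ∧ ((n : ℝ) + |R| + 1 ≤ ‖(y.1 : EuclideanSpace ℝ (Fin d))‖) := by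
    intro n
    have h1 : ∀ᶠ x in cocompact (EuclideanSpace ℝ (Fin d)), (n : ℝ) + A ≤ w x :=
      hw_infty.eventually_ge_atTop _
    obtain ⟨K1, hK1c, hK1⟩ := mem_cocompact.1 h1
    set K2 : Set (EuclideanSpace ℝ (Fin d)) := Metric.closedBall 0 ((n : ℝ) + |R| + 1) with hK2
    have hK2c : IsCompact K2 := isCompact_closedBall _ _
    have : ¬ (E ⊆ K1 ∪ K2) := by
      intro hsub
      exact hE_noncompact ((hK1c.union hK2c).of_isClosed_subset hE_closed hsub)
    obtain ⟨x, hxE, hxK⟩ := Set.not_subset.1 this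
    rw [Set.mem_union] at hxK
    push_neg at hxK
    refine ⟨⟨x, hxE⟩, hK1 hxK.1, ?_⟩
    have := hxK.2
    rw [hK2, Metric.mem_closedBall, dist_zero_right] at this
    exact le_of_not_ge this
  choose y hyw hynorm using hyex
  -- per-n data
  set W : ℕ → ℝ := fun n => w (y n).1 with hW
  have hWA : ∀ n : ℕ, (n : ℝ) + A ≤ W n := hyw
  have hWpos : ∀ n : ℕ, 0 < W n := by
    intro n
    have h1 := hWA n
    have h2 : (0:ℝ) ≤ (n:ℝ) := Nat.cast_nonneg n
    linarith
  -- solve for b by the intermediate value theorem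
  have hbex : ∀ n : ℕ, ∃ b : ℝ, 0 ≤ b ∧ b ≤ c + 1 ∧
      (1 - b / W n) * Real.exp (-((1 - b / W n) * mE + b)) = Real.exp (-(mE + c)) := by
    intro n
    set g : ℝ → ℝ := fun b => (1 - b / W n) * Real.exp (-((1 - b / W n) * mE + b)) with hg
    have hgc : ContinuousOn g (Set.Icc 0 (c+1)) := by
      apply Continuous.continuousOn
      have h1 : Continuous fun b : ℝ => 1 - b / W n :=
        continuous_const.sub (continuous_id.div_const _)
      exact h1.mul (Real.continuous_exp.comp (((h1.mul continuous_const).add continuous_id).neg))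
    have key : Real.exp (-(mE + c)) ∈ Set.Icc (g (c+1)) (g 0) := by
      constructor
      · -- g (c+1) ≤ exp(-(mE+c))
        have hs1 : (c+1) / W n ≤ 1/2 := by
          rw [div_le_iff₀ (hWpos n)]
          nlinarith [hWA n, Nat.cast_nonneg (α := ℝ) n, hA2, hc0, hmE0,
            mul_nonneg (by linarith : (0:ℝ) ≤ c+1) hmE0]
        have hs0 : 0 ≤ (c+1) / W n := div_nonneg (by linarith) (le_of_lt (hWpos n))
        have hsm : ((c+1) / W n) * mE ≤ 1 := by
          rw [div_mul_eq_mul_div, div_le_one (hWpos n)]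
          calc (c+1) * mE ≤ A := by
                rw [hA]; linarith [mul_nonneg (by linarith : (0:ℝ) ≤ c+1) hmE0, hc0]
            _ ≤ W n := by linarith [hWA n, Nat.cast_nonneg (α := ℝ) n]
        have h1 : (1 - (c+1)/W n) ≤ 1 := by linarith
        have h2 : (0:ℝ) ≤ 1 - (c+1)/W n := by linarith
        have h3 : -((1 - (c+1)/W n) * mE + (c+1)) ≤ -(mE + c) := by nlinarith [hsm]
        calc g (c+1) ≤ 1 * Real.exp (-((1 - (c+1)/W n) * mE + (c+1))) := by
              rw [hg]
              exact mul_le_mul_of_nonneg_right h1 (le_of_lt (Real.exp_pos _))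
          _ = Real.exp (-((1 - (c+1)/W n) * mE + (c+1))) := one_mul _
          _ ≤ Real.exp (-(mE + c)) := Real.exp_le_exp.2 h3
      · -- exp(-(mE+c)) ≤ g 0
        have : g 0 = Real.exp (-mE) := by
          rw [hg]; simp
        rw [this]
        exact Real.exp_le_exp.2 (by linarith)
    have := intermediate_value_Icc' (by linarith : (0:ℝ) ≤ c+1) hgc key
    obtain ⟨b, hbmem, hbeq⟩ := this
    exact ⟨b, hbmem.1, hbmem.2, hbeq⟩
  choose b hb0 hb1 hbeq using hbex
  set s : ℕ → ℝ := fun n => b n / W n with hs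
  have hs0 : ∀ n, 0 ≤ s n := fun n => div_nonneg (hb0 n) (le_of_lt (hWpos n))
  have hs12 : ∀ n, s n ≤ 1/2 := by
    intro n
    rw [hs]
    show b n / W n ≤ 1/2
    rw [div_le_iff₀ (hWpos n)]
    have h1 := hWA n
    have h2 : (0:ℝ) ≤ (n:ℝ) := Nat.cast_nonneg n
    have h3 := hb1 n
    have h4 : (c+1) * mE ≥ 0 := mul_nonneg (by linarith) hmE0
    rw [hA] at h1
    linarith
  have h1s : ∀ n, 0 ≤ 1 - s n := fun n => by linarith [hs12 n]
  -- the approximating measures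
  set σm : ℕ → Measure (OnePoint E) := fun n =>
    ENNReal.ofReal (1 - s n) • νE + ENNReal.ofReal (b n) • Measure.dirac ((y n : OnePoint E)) with hσm
  haveI hσfin : ∀ n, IsFiniteMeasure (σm n) := by
    intro n
    refine ⟨?_⟩
    show (ENNReal.ofReal (1 - s n) • νE + ENNReal.ofReal (b n) • Measure.dirac ((y n : OnePoint E)))
      Set.univ < ⊤
    rw [Measure.add_apply, Measure.smul_apply, Measure.smul_apply, smul_eq_mul, smul_eq_mul]
    exact ENNReal.add_lt_top.2 ⟨ENNReal.mul_lt_top ENNReal.ofReal_lt_top (measure_lt_top _ _),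
      ENNReal.mul_lt_top ENNReal.ofReal_lt_top (measure_lt_top _ _)⟩
  set σ : ℕ → FiniteMeasure (OnePoint E) := fun n => ⟨σm n, hσfin n⟩ with hσ
  have hσtoMeasure : ∀ n, (σ n).toMeasure = σm n := fun n => rfl
  -- the w⁻¹ integral is 1
  have hXσ : ∀ n, (∫⁻ x, ENNReal.ofReal (winvOP w E x) ∂(σ n).toMeasure) = 1 := by
    intro n
    rw [hσtoMeasure, hσm]
    rw [lintegral_perturbed νE _ _ _ hwOPm, hlint_νE, mul_one]
    have hv : winvOP w E ((y n : OnePoint E)) = (W n)⁻¹ := rfl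
    rw [hv, ← ENNReal.ofReal_mul (hb0 n)]
    have hbs : b n * (W n)⁻¹ = s n := by rw [hs]; ring
    rw [hbs, ← ENNReal.ofReal_add (h1s n) (hs0 n)]
    norm_num
  -- mass of σ n
  have hmassσ : ∀ n, ((σ n).toMeasure Set.univ).toReal = (1 - s n) * mE + b n := by
    intro n
    rw [hσtoMeasure, hσm]
    show ((ENNReal.ofReal (1 - s n) • νE + ENNReal.ofReal (b n)
      • Measure.dirac ((y n : OnePoint E))) Set.univ).toReal = _
    rw [Measure.add_apply, Measure.smul_apply, Measure.smul_apply, smul_eq_mul, smul_eq_mul,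
      Measure.dirac_apply_of_mem (Set.mem_univ _), mul_one, ENNReal.toReal_add
        (ENNReal.mul_ne_top ENNReal.ofReal_ne_top (measure_ne_top _ _)) ENNReal.ofReal_ne_top,
      ENNReal.toReal_mul, ENNReal.toReal_ofReal (h1s n), ENNReal.toReal_ofReal (hb0 n), hmE]
  -- no mass at ∞
  have hσS : ∀ n, (σ n).toMeasure {(OnePoint.infty : OnePoint E)} = 0 := by
    intro n
    rw [hσtoMeasure, hσm]
    show (ENNReal.ofReal (1 - s n) • νE + ENNReal.ofReal (b n)
      • Measure.dirac ((y n : OnePoint E))) {(OnePoint.infty : OnePoint E)} = 0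
    rw [Measure.add_apply, Measure.smul_apply, Measure.smul_apply, smul_eq_mul, smul_eq_mul]
    have h1 : νE {(OnePoint.infty : OnePoint E)} = 0 := by
      rw [hνE, Measure.restrict_apply (mS)]
      rw [hS]
      rw [Set.inter_compl_self]
      exact measure_empty
    have h2 : Measure.dirac ((y n : OnePoint E)) {(OnePoint.infty : OnePoint E)} = 0 := by
      rw [Measure.dirac_apply' _ mS]
      apply Set.indicator_of_notMem
      exact fun h => OnePoint.coe_ne_infty (y n) (Set.mem_singleton_iff.1 h)
    rw [h1, h2, mul_zero, mul_zero, add_zero]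
  -- membership in T(𝒫_w)
  have hσT : ∀ n, MemTPw w E (σ n) := fun n =>
    memTPw_of_infty_null hw_cont hw_one hw_infty hE_closed (σ n) (hσS n) (hXσ n)
  -- equality of the values of f
  have hfeq : ∀ n, f (σ n) = f νstar := by
    intro n
    apply hR
    intro φ hφ1 hφ2 hφ3
    have hφc : Continuous (fun z : OnePoint E => z.elim 0 (fun y : E => φ y.1)) :=
      elim_cont_of_compact_support φ hφ1.continuous hφ2 hE_closed
    have hφy : φ (y n).1 = 0 := by
      apply image_eq_zero_of_notMem_tsupport
      intro hmem
      have h1 := hφ3 hmem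
      rw [Metric.mem_closedBall, dist_zero_right] at h1
      have h2 := hynorm n
      have h3 : R ≤ |R| := le_abs_self R
      have h4 : (0:ℝ) ≤ (n:ℝ) := Nat.cast_nonneg n
      linarith
    have hint1 : ∫ x, (x.elim 0 (fun y : E => φ y.1)) ∂(σ n).toMeasure
        = (1 - s n) * (∫ x, (x.elim 0 (fun y : E => φ y.1)) ∂ν) := by
      rw [hσtoMeasure, hσm]
      rw [integral_perturbed νE _ _ _ (h1s n) (hb0 n) hφc]
      have h5 : (((y n : OnePoint E)).elim 0 (fun y : E => φ y.1)) = φ (y n).1 := rfl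
      rw [h5, hφy, mul_zero, add_zero]
      congr 1
      have h6 := integral_split (E := E) ν hφc
      have h7 : ((OnePoint.infty : OnePoint E).elim 0 (fun y : E => φ y.1)) = 0 := rfl
      rw [h7, mul_zero, add_zero] at h6
      rw [hνE, hS]
      exact h6.symm
    show Iobs φ (σ n) = Iobs φ νstar
    unfold Iobs
    rw [← hν, hint1, hmassσ n, hmass]
    have hsn : s n = b n / W n := by rw [hs]
    have key : (1 - s n) * Real.exp (-((1 - s n) * mE + b n)) = Real.exp (-(mE + c)) := by
      rw [hsn]; exact hbeq n
    calc (1 - s n) * (∫ x, (x.elim 0 (fun y : E => φ y.1)) ∂ν) *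
          Real.exp (-((1 - s n) * mE + b n))
        = (∫ x, (x.elim 0 (fun y : E => φ y.1)) ∂ν) *
          ((1 - s n) * Real.exp (-((1 - s n) * mE + b n))) := by ring
      _ = (∫ x, (x.elim 0 (fun y : E => φ y.1)) ∂ν) * Real.exp (-(mE + c)) := by rw [key]
  -- apply the hypothesis at each σ n
  have hGσ : ∀ n, G ⟨σ n, hXσ n⟩ ≤ 0 := by
    intro n
    apply hyp (σ n) (hXσ n) (hσT n)
    · intro ν' hν'
      rw [hfeq n]
      exact hmax ν' (lintegral_winvOP_eq_one_of_memTPw hw_cont hw_one hw_infty hE_closed ν' hν')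
    · rw [hfeq n]; exact hpos
  -- limits: s n → 0
  have hslim : Tendsto s atTop (𝓝 0) := by
    apply squeeze_zero' (Eventually.of_forall hs0)
      (g := fun n : ℕ => (c + 1) / (n : ℝ))
    · filter_upwards [eventually_ge_atTop 1] with n hn
      have hnpos : (0:ℝ) < (n:ℝ) := by exact_mod_cast hn
      have hWn : (n : ℝ) ≤ W n := by
        have := hWA n
        linarith [hA2]
      rw [hs]
      show b n / W n ≤ (c+1) / (n:ℝ)
      apply div_le_div₀ (by linarith [hc0]) (hb1 n) hnpos hWn
    · exact tendsto_const_div_atTop_nhds_zero_nat (c+1)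
  -- b n → c
  have hbrep : ∀ n, b n = c + Real.log (1 - s n) + s n * mE := by
    intro n
    have hpos1 : (0:ℝ) < 1 - s n := by linarith [hs12 n]
    have hsn : s n = b n / W n := by rw [hs]
    have h := congrArg Real.log (hbeq n)
    rw [← hsn] at h
    rw [Real.log_mul (ne_of_gt hpos1) (Real.exp_ne_zero _), Real.log_exp, Real.log_exp] at h
    linarith
  have hloglim : Tendsto (fun n => Real.log (1 - s n)) atTop (𝓝 0) := by
    have h1 : Tendsto (fun n => 1 - s n) atTop (𝓝 1) := by
      have h0 : Tendsto (fun _ : ℕ => (1:ℝ)) atTop (𝓝 1) := tendsto_const_nhds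
      simpa using h0.sub hslim
    have h2 := (Real.continuousAt_log (one_ne_zero)).tendsto.comp h1
    simpa [Function.comp_def] using h2
  have hblim : Tendsto b atTop (𝓝 c) := by
    have h1 : Tendsto (fun n => c + Real.log (1 - s n) + s n * mE) atTop
        (𝓝 (c + 0 + 0 * mE)) :=
      (tendsto_const_nhds.add hloglim).add (hslim.mul tendsto_const_nhds)
    simp only [add_zero, zero_mul] at h1
    exact h1.congr (fun n => (hbrep n).symm)
  have h1mslim : Tendsto (fun n => 1 - s n) atTop (𝓝 1) := by
    have h0 : Tendsto (fun _ : ℕ => (1:ℝ)) atTop (𝓝 1) := tendsto_const_nhds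
    simpa using h0.sub hslim
  -- y n → ∞ in OnePoint E
  have hylim : Tendsto (fun n => ((y n : ↥E) : OnePoint E)) atTop (𝓝 OnePoint.infty) := by
    rw [OnePoint.nhds_infty_eq]
    apply Filter.Tendsto.mono_right _ le_sup_left
    apply tendsto_map.comp
    rw [hasBasis_coclosedCompact.tendsto_right_iff]
    rintro K ⟨hKc, hKcomp⟩
    have hbd : Bornology.IsBounded (Subtype.val '' K) :=
      (hKcomp.image continuous_subtype_val).isBounded
    obtain ⟨M, hM⟩ := hbd.subset_closedBall 0
    filter_upwards [eventually_ge_atTop (Nat.ceil (M + 1))] with n hn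
    intro hmem
    have h1 : (y n).1 ∈ Subtype.val '' K := Set.mem_image_of_mem _ hmem
    have h2 := hM h1
    rw [Metric.mem_closedBall, dist_zero_right] at h2
    have h3 := hynorm n
    have h4 : (M + 1 : ℝ) ≤ (n : ℝ) := by
      calc (M + 1 : ℝ) ≤ (Nat.ceil (M+1) : ℝ) := Nat.le_ceil _
        _ ≤ (n : ℝ) := by exact_mod_cast hn
    have h5 : (0:ℝ) ≤ |R| := abs_nonneg R
    linarith
  -- convergence of the measures
  have hconv : Tendsto σ atTop (𝓝 νstar) := by
    rw [FiniteMeasure.tendsto_iff_forall_integral_tendsto]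
    intro g
    have hint : ∀ n, ∫ x, g x ∂(σ n).toMeasure
        = (1 - s n) * (∫ x, g x ∂νE) + b n * g ((y n : OnePoint E)) := by
      intro n
      rw [hσtoMeasure, hσm]
      exact integral_perturbed νE _ _ _ (h1s n) (hb0 n) g.continuous
    have hsplitg : ∫ x, g x ∂ν = (∫ x, g x ∂νE) + c * g OnePoint.infty := by
      have h6 := integral_split (E := E) ν g.continuous
      rw [hνE, hS]
      exact h6
    have hglim : Tendsto (fun n => g ((y n : OnePoint E))) atTop (𝓝 (g OnePoint.infty)) :=
      (g.continuous.tendsto _).comp hylim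
    have h7 : Tendsto (fun n => (1 - s n) * (∫ x, g x ∂νE) + b n * g ((y n : OnePoint E)))
        atTop (𝓝 (1 * (∫ x, g x ∂νE) + c * g OnePoint.infty)) :=
      ((h1mslim.mul tendsto_const_nhds)).add (hblim.mul hglim)
    rw [one_mul] at h7
    have h8 : Tendsto (fun n => ∫ x, g x ∂(σ n).toMeasure) atTop
        (𝓝 ((∫ x, g x ∂νE) + c * g OnePoint.infty)) := h7.congr (fun n => (hint n).symm)
    rw [← hsplitg] at h8
    exact h8
  -- conclude by continuity of G
  have hconvX : Tendsto (fun n => (⟨σ n, hXσ n⟩ : XSp w E)) atTop (𝓝 ⟨νstar, hνstar⟩) := by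
    apply tendsto_subtype_rng.2
    exact hconv
  have hGlim : Tendsto (fun n => G ⟨σ n, hXσ n⟩) atTop (𝓝 (G ⟨νstar, hνstar⟩)) :=
    (hG.tendsto _).comp hconvX
  exact le_of_tendsto hGlim (Eventually.of_forall hGσ)
end
end
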